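/- arXiv:2309.13897 — 4 statements merged into one kernel-verified Lean document; each statement's English description precedes it below -/
import Mathlib

section
/- Let $\sigma \in C_b^4(\mathbb{R})$, $B$ a Hölder continuous path, and consider the Crank–Nicolson step $\hat{Y}_t = \hat{Y}_{\tau} + \frac{1}{2}(\sigma(\hat{Y}_\tau) + \sigma(\hat{Y}_t))\,\delta B$ with $\delta B = B_t - B_\tau$ (no drift, assume the implicit equation has a solution with $|\hat Y_t - \hat Y_\tau| = O(|\delta B|)$ and $\frac12\|\sigma'\|_\infty |\delta B| < 1/2$). Then $\hat{Y}_t = \hat{Y}_\tau + \sigma(\hat{Y}_\tau)\delta B + \frac{1}{2}\sigma\sigma'(\hat{Y}_\tau)\delta B^2 + \frac{1}{4}\big((\sigma')^2\sigma + \sigma''\sigma^2\big)(\hat{Y}_\tau)\delta B^3 + O(|\delta B|^4)$, where the implied constant depends only on $\|\sigma\|_{C^3}$. -/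
open Set

lemma itw_eq {f : ℝ → ℝ} (hf : ContDiff ℝ 4 f) {a b : ℝ} (hab : a < b) {n : ℕ}
    (hn : (n : WithTop ℕ∞) ≤ 4) {x : ℝ} (hx : x ∈ Icc a b) :
    iteratedDerivWithin n f (Icc a b) x = iteratedDeriv n f x := by
  have h1 : HasFTaylorSeriesUpTo 4 f (ftaylorSeries ℝ f) :=
    contDiff_iff_ftaylorSeries.mp hf
  have h2 : HasFTaylorSeriesUpToOn 4 f (ftaylorSeries ℝ f) (Icc a b) :=
    (hasFTaylorSeriesUpToOn_univ_iff.mpr h1).mono (subset_univ _)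
  have h3 := h2.eq_iteratedFDerivWithin_of_uniqueDiffOn hn (uniqueDiffOn_Icc hab) hx
  rw [iteratedDerivWithin_eq_iteratedFDerivWithin, iteratedDeriv_eq_iteratedFDeriv, ← h3]
  rfl

lemma taylor2_right {f : ℝ → ℝ} (hf : ContDiff ℝ 4 f) {M x y : ℝ}
    (hM3 : ∀ z, |iteratedDeriv 3 f z| ≤ M) (hxy : x < y) :
    |f y - f x - deriv f x * (y - x) - iteratedDeriv 2 f x / 2 * (y - x)^2| ≤ M/2 * |y - x|^3 := by
  have hcd : ContDiffOn ℝ (2 + 1 : ℕ) f (Icc x y) := (hf.of_le (by norm_num)).contDiffOn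
  have hC : ∀ z ∈ Icc x y, ‖iteratedDerivWithin (2 + 1) f (Icc x y) z‖ ≤ M := by
    intro z hz
    rw [Real.norm_eq_abs, itw_eq hf hxy (by norm_num) hz]
    exact hM3 z
  have hb := taylor_mean_remainder_bound (n := 2) hxy.le hcd (right_mem_Icc.mpr hxy.le) hC
  rw [taylor_within_apply] at hb
  have hxm : x ∈ Icc x y := left_mem_Icc.mpr hxy.le
  have e0 : iteratedDerivWithin 0 f (Icc x y) x = f x := by
    rw [itw_eq hf hxy (by norm_num) hxm, iteratedDeriv_zero]
  have e1 : iteratedDerivWithin 1 f (Icc x y) x = deriv f x := by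
    rw [itw_eq hf hxy (by norm_num) hxm, iteratedDeriv_one]
  have e2 : iteratedDerivWithin 2 f (Icc x y) x = iteratedDeriv 2 f x :=
    itw_eq hf hxy (by norm_num) hxm
  simp only [Finset.sum_range_succ, Finset.sum_range_zero, e0, e1, e2, smul_eq_mul] at hb
  rw [Real.norm_eq_abs] at hb
  have h1 : f y - (0 + (Nat.factorial 0 : ℝ)⁻¹ * (y - x) ^ 0 * f x
      + (Nat.factorial 1 : ℝ)⁻¹ * (y - x) ^ 1 * deriv f x +
      (Nat.factorial 2 : ℝ)⁻¹ * (y - x) ^ 2 * iteratedDeriv 2 f x) =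
      f y - f x - deriv f x * (y - x) - iteratedDeriv 2 f x / 2 * (y - x)^2 := by
    norm_num [Nat.factorial]; ring
  rw [h1] at hb
  refine hb.trans (le_of_eq ?_)
  rw [abs_of_pos (by linarith : (0:ℝ) < y - x)]
  norm_num [Nat.factorial]
  ring

lemma taylor2 {f : ℝ → ℝ} (hf : ContDiff ℝ 4 f) {M x y : ℝ}
    (hM3 : ∀ z, |iteratedDeriv 3 f z| ≤ M) :
    |f y - f x - deriv f x * (y - x) - iteratedDeriv 2 f x / 2 * (y - x)^2| ≤ M/2 * |y - x|^3 := by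
  rcases lt_trichotomy x y with h | h | h
  · exact taylor2_right hf hM3 h
  · subst h; simp
  · have hg : ContDiff ℝ 4 (fun t => f (-t)) := hf.comp contDiff_neg
    have hM3' : ∀ z, |iteratedDeriv 3 (fun t => f (-t)) z| ≤ M := by
      intro z
      rw [iteratedDeriv_comp_neg]
      rw [smul_eq_mul, abs_mul]
      simpa using hM3 (-z)
    have H := taylor2_right hg hM3' (show -x < -y by linarith)
    simp only [neg_neg, deriv_comp_neg, iteratedDeriv_comp_neg] at H
    have e1 : f y - f x - -deriv f x * (-y - -x) -
        ((-1:ℝ)^2 • iteratedDeriv 2 f x) / 2 * (-y - -x)^2 =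
        f y - f x - deriv f x * (y - x) - iteratedDeriv 2 f x / 2 * (y - x)^2 := by
      simp; ring
    have e2 : |(-y - -x : ℝ)| = |y - x| := by rw [show (-y - -x : ℝ) = -(y-x) by ring, abs_neg]
    rwa [e1, e2] at H


set_option maxHeartbeats 2000000 in
/-- Third-order expansion of one Crank–Nicolson step
`ŷ_t = ŷ_τ + ½(σ(ŷ_τ)+σ(ŷ_t)) δB`:
`ŷ_t = ŷ_τ + σ(ŷ_τ)δB + ½ σσ'(ŷ_τ) δB² + ¼((σ')²σ + σ''σ²)(ŷ_τ) δB³ + O(|δB|⁴)`,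
with a constant depending only on the `C³` data of `σ` (and the a priori constant `K`). -/
theorem stmt9 (σ : ℝ → ℝ) (hσ : ContDiff ℝ 4 σ) (M : ℝ) (hM : 0 < M)
    (hbd : ∀ i : ℕ, i ≤ 3 → ∀ x : ℝ, |iteratedDeriv i σ x| ≤ M)
    (K : ℝ) (hK : 0 < K) :
    ∃ C : ℝ, 0 < C ∧
      ∀ yτ yt δB : ℝ,
        yt = yτ + (σ yτ + σ yt) / 2 * δB →
        |yt - yτ| ≤ K * |δB| →
        (1 / 2) * M * |δB| < 1 / 2 →
        |yt - (yτ + σ yτ * δB + (1 / 2) * (σ yτ * deriv σ yτ) * δB ^ 2 +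
            (1 / 4) * ((deriv σ yτ) ^ 2 * σ yτ + iteratedDeriv 2 σ yτ * (σ yτ) ^ 2) *
              δB ^ 3)| ≤ C * |δB| ^ 4 := by
  have hM3 : ∀ z, |iteratedDeriv 3 σ z| ≤ M := hbd 3 le_rfl
  set m := M⁻¹ with hmdef
  have hm : M * m = 1 := mul_inv_cancel₀ hM.ne'
  have hm0 : 0 < m := by positivity
  set A : ℝ := M*K/2 + K^2/4 + K^3*m/4 with hAdef
  have hA : 0 < A := by positivity
  set A₂ : ℝ := M*A/2 + M*K^2/4 + K^3/4 with hA2def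
  have hA2 : 0 < A₂ := by positivity
  refine ⟨M*A₂/2 + M*A*(K+M)/4 + M*K^3/4, by positivity, ?_⟩
  intro yτ yt δB heq hKb hsm
  set a := σ yτ with hadef
  set b := deriv σ yτ with hbdef
  set c := iteratedDeriv 2 σ yτ with hcdef
  have ha : |a| ≤ M := by simpa [iteratedDeriv_zero] using hbd 0 (by norm_num) yτ
  have hbb : |b| ≤ M := by simpa [iteratedDeriv_one] using hbd 1 (by norm_num) yτ
  have hc : |c| ≤ M := hbd 2 (by norm_num) yτ
  set d := δB with hddef
  set h := yt - yτ with hhdef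
  set D := |d| with hDdef
  have hD : 0 ≤ D := abs_nonneg d
  have hMd : M * D ≤ 1 := by nlinarith
  have hH : |h| ≤ K * D := hKb
  set R := σ yt - a - b*h - c/2*h^2 with hRdef
  have hR : |R| ≤ M/2*(K*D)^3 := by
    have h0 := taylor2 hσ (x := yτ) (y := yt) hM3
    have e : σ yt - σ yτ - deriv σ yτ * (yt - yτ) - iteratedDeriv 2 σ yτ / 2 * (yt - yτ)^2
        = R := by rw [hRdef]
    rw [e] at h0
    refine h0.trans ?_
    gcongr
  have heq2 : h = (a + σ yt)/2 * d := by rw [hhdef]; linear_combination heq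
  have heq' : h = a*d + b/2*d*h + c/4*d*h^2 + d/2*R := by
    linear_combination heq2 - d/2 * hRdef
  have habs3 : ∀ x y z : ℝ, |x + y + z| ≤ |x| + |y| + |z| := fun x y z =>
    (abs_add_le _ _).trans (add_le_add_left (abs_add_le _ _) _)
  have t2 : |c/4*d*h^2| ≤ M/4*D*(K*D)^2 := by
    have e4 : |c/4*d*h^2| = |c| / 4 * |d| * |h| ^ 2 := by
      rw [abs_mul, abs_mul, abs_div, abs_pow]; norm_num
    rw [e4]
    gcongr
  have t3 : |d/2*R| ≤ D/2*(M/2*(K*D)^3) := by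
    have e4 : |d/2*R| = |d| / 2 * |R| := by rw [abs_mul, abs_div, abs_two]
    rw [e4]
    gcongr
  -- first-order error
  have hE : |h - a*d| ≤ A * D^2 := by
    have e : h - a*d = b/2*d*h + c/4*d*h^2 + d/2*R := by linear_combination heq'
    rw [e]
    refine (habs3 _ _ _).trans ?_
    have t1 : |b/2*d*h| ≤ M/2*D*(K*D) := by
      rw [abs_mul, abs_mul, abs_div, abs_two]
      gcongr
    have hMD0 : 0 ≤ M*D := mul_nonneg hM.le hD
    have hMD2 : (M*D)*(M*D) ≤ 1 := by
      calc (M*D)*(M*D) ≤ 1*1 := mul_le_mul hMd hMd hMD0 zero_le_one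
      _ = 1 := one_mul 1
    have q : 0 ≤ m - M*D^2 := by
      have h1 : 0 ≤ m*(1 - (M*D)*(M*D)) := mul_nonneg hm0.le (by linarith)
      have h2 : m*(1 - (M*D)*(M*D)) = m - M*D^2 := by
        linear_combination (-(M*D^2)) * hm
      linarith [h1, h2.le, h2.ge]
    have p1 : 0 ≤ K^2*D^2*(1 - M*D) :=
      mul_nonneg (by positivity) (by linarith)
    have p2 : 0 ≤ K^3*D^2*(m - M*D^2) :=
      mul_nonneg (by positivity) q
    have key : M/2*D*(K*D) + M/4*D*(K*D)^2 + D/2*(M/2*(K*D)^3) ≤ A * D^2 := by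
      rw [hAdef]
      linarith [p1, p2]
    linarith
  -- second-order error
  have hE2 : |h - a*d - a*b/2*d^2| ≤ A₂ * D^3 := by
    have e : h - a*d - a*b/2*d^2 = b/2*d*(h - a*d) + c/4*d*h^2 + d/2*R := by
      linear_combination heq'
    rw [e]
    refine (habs3 _ _ _).trans ?_
    have t1 : |b/2*d*(h - a*d)| ≤ M/2*D*(A*D^2) := by
      rw [abs_mul, abs_mul, abs_div, abs_two]
      gcongr
    have p1 : 0 ≤ K^2*D^2*(1 - M*D) :=
      mul_nonneg (by positivity) (by linarith)
    have p3 : 0 ≤ K^3*D^3*(1 - M*D) :=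
      mul_nonneg (by positivity) (by linarith)
    have key : M/2*D*(A*D^2) + M/4*D*(K*D)^2 + D/2*(M/2*(K*D)^3) ≤ A₂ * D^3 := by
      rw [hA2def]
      linarith [p1, p3]
    linarith
  -- third-order error
  have goaleq : yt - (yτ + a * d + (1 / 2) * (a * b) * d ^ 2 +
      (1 / 4) * (b ^ 2 * a + c * a ^ 2) * d ^ 3)
      = b/2*d*(h - a*d - a*b/2*d^2) + c/4*d*((h - a*d)*(h + a*d)) + d/2*R := by
    linear_combination heq'
  rw [goaleq]
  refine ((habs3 _ _ _).trans ?_)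
  have t1 : |b/2*d*(h - a*d - a*b/2*d^2)| ≤ M/2*D*(A₂*D^3) := by
    rw [abs_mul, abs_mul, abs_div, abs_two]
    gcongr
  have t2' : |c/4*d*((h - a*d)*(h + a*d))| ≤ M/4*D*((A*D^2)*((K+M)*D)) := by
    have e4 : |c/4*d*((h - a*d)*(h + a*d))| = |c| / 4 * |d| * (|h - a*d| * |h + a*d|) := by
      rw [abs_mul, abs_mul, abs_mul, abs_div]; norm_num
    rw [e4]
    have hha : |h + a*d| ≤ (K+M)*D := by
      refine (abs_add_le _ _).trans ?_
      have had : |a*d| ≤ M*D := by rw [abs_mul]; gcongr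
      nlinarith
    gcongr
  have key : M/2*D*(A₂*D^3) + M/4*D*((A*D^2)*((K+M)*D)) + D/2*(M/2*(K*D)^3)
      ≤ (M*A₂/2 + M*A*(K+M)/4 + M*K^3/4) * D^4 := le_of_eq (by ring)
  linarith
end

section
/- Let $\alpha \in (0,1)$, $x \in C^\alpha([0,T];\mathbb{R})$, and $q$ the integer with $(q+1)^{-1} < \alpha \le q^{-1}$. Suppose $z = (z^{(1)},\dots,z^{(q)}) \in C^\alpha([0,T];\mathbb{R}^q)$ satisfies, for all $1 \le k \le q$ and $s,t \in [0,T]$: $z^{(k)}_t - z^{(k)}_s - \sum_{j=1}^{q-k}\frac{1}{j!}z^{(k+j)}_s (x_t - x_s)^j = O(|t-s|^{(q-k+1)\alpha})$. Then there exists a unique path $\mathcal{I}(z) \in C^\alpha([0,T];\mathbb{R})$ with $\mathcal{I}(z)_0 = 0$ such that $\mathcal{I}(z)_t - \mathcal{I}(z)_s - \sum_{k=1}^q \frac{1}{k!}z^{(k)}_s (x_t - x_s)^k = O(|t-s|^{(q+1)\alpha})$ for all $s,t \in [0,T]$. -/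
set_option maxHeartbeats 1000000

open Set Finset Filter Topology

lemma sum_pair (f : ℕ → ℝ) (k : ℕ) :
    ∑ i ∈ Finset.range (2*k), f i = ∑ j ∈ Finset.range k, (f (2*j) + f (2*j+1)) := by
  induction k with
  | zero => simp
  | succ k ih =>
    have h : 2*(k+1) = (2*k+1)+1 := by ring
    rw [h, Finset.sum_range_succ, Finset.sum_range_succ, Finset.sum_range_succ, ← ih]
    ring

lemma aux_identity (q : ℕ) (w : ℕ → ℝ) (a b : ℝ) :
    ∑ k ∈ Finset.Icc 1 q, (1/(k.factorial:ℝ)) * w k * ((a+b)^k - a^k)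
    = ∑ m ∈ Finset.Icc 1 q, (1/(m.factorial:ℝ)) * b^m *
        (w m + ∑ j ∈ Finset.Icc 1 (q - m), (1/(j.factorial:ℝ)) * w (m+j) * a^j) := by
  have hL : ∀ k, 1 ≤ k →
      (1/(k.factorial:ℝ)) * w k * ((a+b)^k - a^k)
      = ∑ j ∈ Finset.range k, (1/(k.factorial:ℝ)) * w k * (a^j * b^(k-j) * (k.choose j : ℝ)) := by
    intro k hk
    rw [add_pow, Finset.sum_range_succ]
    simp only [Nat.sub_self, Nat.choose_self, pow_zero, Nat.cast_one, mul_one]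
    rw [← Finset.mul_sum]
    ring
  have hR : ∀ m, 1 ≤ m → m ≤ q →
      (1/(m.factorial:ℝ)) * b^m *
        (w m + ∑ j ∈ Finset.Icc 1 (q - m), (1/(j.factorial:ℝ)) * w (m+j) * a^j)
      = ∑ j ∈ Finset.range (q - m + 1),
          (1/(m.factorial:ℝ)) * (1/(j.factorial:ℝ)) * w (m+j) * a^j * b^m := by
    intro m h1 h2
    rw [Finset.sum_range_succ' (fun j => (1/(m.factorial:ℝ)) * (1/(j.factorial:ℝ)) * w (m+j) * a^j * b^m) (q-m)]
    rw [show Finset.Icc 1 (q-m) = Finset.Ico 1 (q-m+1) from (Finset.Ico_add_one_right_eq_Icc 1 (q-m)).symm,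
        Finset.sum_Ico_eq_sum_range]
    simp only [Nat.add_sub_cancel]
    rw [mul_add, Finset.mul_sum]
    have hcomm : ∀ i ∈ Finset.range (q - m),
        (1/(m.factorial:ℝ)) * b^m * ((1/((1+i).factorial:ℝ)) * w (m+(1+i)) * a^(1+i))
        = (1/(m.factorial:ℝ)) * (1/((i+1).factorial:ℝ)) * w (m+(i+1)) * a^(i+1) * b^m := by
      intro i _; rw [Nat.add_comm 1 i]; ring
    rw [Finset.sum_congr rfl hcomm]
    simp [Nat.factorial_zero]
    ring
  rw [Finset.sum_congr rfl (fun k hk => hL k (Finset.mem_Icc.mp hk).1),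
      Finset.sum_congr rfl (fun m hm => hR m (Finset.mem_Icc.mp hm).1 (Finset.mem_Icc.mp hm).2)]
  rw [Finset.sum_sigma', Finset.sum_sigma']
  refine Finset.sum_nbij' (fun p => ⟨p.1 - p.2, p.2⟩) (fun p => ⟨p.1 + p.2, p.2⟩) ?_ ?_ ?_ ?_ ?_
  · rintro ⟨k, j⟩ h
    simp only [Finset.mem_sigma, Finset.mem_Icc, Finset.mem_range] at h ⊢
    omega
  · rintro ⟨m, j⟩ h
    simp only [Finset.mem_sigma, Finset.mem_Icc, Finset.mem_range] at h ⊢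
    omega
  · rintro ⟨k, j⟩ h
    simp only [Finset.mem_sigma, Finset.mem_Icc, Finset.mem_range] at h
    dsimp only
    have hkj : k - j + j = k := by omega
    rw [hkj]
  · rintro ⟨m, j⟩ h
    simp only [Finset.mem_sigma, Finset.mem_Icc, Finset.mem_range] at h
    dsimp only
    have hmj : m + j - j = m := by omega
    rw [hmj]
  · rintro ⟨k, j⟩ h
    simp only [Finset.mem_sigma, Finset.mem_Icc, Finset.mem_range] at h
    obtain ⟨⟨h1, h2⟩, hj⟩ := h
    have hjk : j ≤ k := le_of_lt hj
    have hmj : k - j + j = k := Nat.sub_add_cancel hjk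
    simp only [hmj]
    have hfac : ((k.choose j : ℝ)) * (j.factorial:ℝ) * ((k-j).factorial:ℝ) = (k.factorial:ℝ) := by
      exact_mod_cast congrArg (Nat.cast (R := ℝ)) (Nat.choose_mul_factorial_mul_factorial hjk)
    have f1 : (k.factorial:ℝ) ≠ 0 := Nat.cast_ne_zero.mpr (Nat.factorial_ne_zero k)
    have f2 : (j.factorial:ℝ) ≠ 0 := Nat.cast_ne_zero.mpr (Nat.factorial_ne_zero j)
    have f3 : (((k-j).factorial:ℝ)) ≠ 0 := Nat.cast_ne_zero.mpr (Nat.factorial_ne_zero (k-j))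
    field_simp
    linear_combination w k * a^j * b^(k-j) * hfac

noncomputable def Xi (q : ℕ) (z : ℕ → ℝ → ℝ) (x : ℝ → ℝ) (s t : ℝ) : ℝ :=
  ∑ k ∈ Finset.Icc 1 q, (1/(k.factorial:ℝ)) * z k s * (x t - x s)^k

lemma Xi_self (q : ℕ) (z : ℕ → ℝ → ℝ) (x : ℝ → ℝ) (s : ℝ) : Xi q z x s s = 0 := by
  unfold Xi
  apply Finset.sum_eq_zero
  intro k hk
  have hk1 : 1 ≤ k := (Finset.mem_Icc.mp hk).1
  rw [sub_self, zero_pow (by omega), mul_zero]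

lemma Xi_delta (T α : ℝ) (hα0 : 0 < α) (q : ℕ)
    (x : ℝ → ℝ) (z : ℕ → ℝ → ℝ) (Cx M : ℝ) (hCx : 0 ≤ Cx) (hM : 0 ≤ M)
    (hx : ∀ s ∈ Icc (0:ℝ) T, ∀ t ∈ Icc (0:ℝ) T, |x t - x s| ≤ Cx * |t - s| ^ α)
    (hctrl : ∀ k : ℕ, 1 ≤ k → k ≤ q → ∀ s ∈ Icc (0:ℝ) T, ∀ t ∈ Icc (0:ℝ) T,
      |z k t - z k s - ∑ j ∈ Finset.Icc 1 (q - k), (1 / (j.factorial : ℝ)) *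
          z (k + j) s * (x t - x s) ^ j| ≤ M * |t - s| ^ (((q : ℝ) - k + 1) * α)) :
    ∀ s ∈ Icc (0:ℝ) T, ∀ u ∈ Icc (0:ℝ) T, ∀ t ∈ Icc (0:ℝ) T,
      |Xi q z x s t - Xi q z x s u - Xi q z x u t|
      ≤ (∑ m ∈ Finset.Icc 1 q, (1/(m.factorial:ℝ)) * Cx^m * M) *
          (max |u - s| |t - u|) ^ (((q:ℝ)+1)*α) := by
  intro s hs u hu t ht
  set D := max |u - s| |t - u| with hDdef
  have hD : 0 ≤ D := le_trans (abs_nonneg _) (le_max_left _ _)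
  have key : Xi q z x s t - Xi q z x s u - Xi q z x u t
      = -∑ m ∈ Finset.Icc 1 q, (1/(m.factorial:ℝ)) * (x t - x u)^m *
          (z m u - z m s - ∑ j ∈ Finset.Icc 1 (q-m), (1/(j.factorial:ℝ)) * z (m+j) s * (x u - x s)^j) := by
    have h1 : Xi q z x s t - Xi q z x s u
        = ∑ k ∈ Finset.Icc 1 q, (1/(k.factorial:ℝ)) * z k s *
            (((x u - x s)+(x t - x u))^k - (x u - x s)^k) := by
      unfold Xi
      rw [← Finset.sum_sub_distrib]
      apply Finset.sum_congr rfl; intro k _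
      have h2 : x t - x s = (x u - x s) + (x t - x u) := by ring
      rw [h2]; ring
    rw [h1, aux_identity q (fun k => z k s) (x u - x s) (x t - x u)]
    unfold Xi
    rw [← Finset.sum_sub_distrib, ← Finset.sum_neg_distrib]
    apply Finset.sum_congr rfl; intro m _; ring
  rw [key, abs_neg]
  calc |∑ m ∈ Finset.Icc 1 q, (1/(m.factorial:ℝ)) * (x t - x u)^m *
          (z m u - z m s - ∑ j ∈ Finset.Icc 1 (q-m), (1/(j.factorial:ℝ)) * z (m+j) s * (x u - x s)^j)|
      ≤ ∑ m ∈ Finset.Icc 1 q, (1/(m.factorial:ℝ)) * Cx^m * M * D ^ (((q:ℝ)+1)*α) := by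
        refine le_trans (Finset.abs_sum_le_sum_abs _ _) (Finset.sum_le_sum ?_)
        intro m hm
        obtain ⟨hm1, hm2⟩ := Finset.mem_Icc.mp hm
        rw [abs_mul, abs_mul]
        have hfac : |(1/(m.factorial:ℝ))| = 1/(m.factorial:ℝ) := by
          rw [abs_of_nonneg]; positivity
        rw [hfac]
        have hb : |(x t - x u)^m| ≤ Cx^m * (D^α)^m := by
          rw [abs_pow, ← mul_pow]
          apply pow_le_pow_left₀ (abs_nonneg _)
          refine le_trans (hx u hu t ht) ?_
          have : |t - u| ^ α ≤ D ^ α :=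
            Real.rpow_le_rpow (abs_nonneg _) (le_max_right _ _) hα0.le
          nlinarith [Real.rpow_nonneg (abs_nonneg (t-u)) α]
        have hr : |z m u - z m s - ∑ j ∈ Finset.Icc 1 (q-m), (1/(j.factorial:ℝ)) * z (m+j) s * (x u - x s)^j|
            ≤ M * D ^ (((q:ℝ) - m + 1) * α) := by
          refine le_trans (hctrl m hm1 hm2 s hs u hu) ?_
          have he : (0:ℝ) ≤ ((q:ℝ) - m + 1) * α := by
            have : (m:ℝ) ≤ q := by exact_mod_cast hm2
            nlinarith
          have : |u - s| ^ (((q:ℝ) - m + 1) * α) ≤ D ^ (((q:ℝ) - m + 1) * α) :=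
            Real.rpow_le_rpow (abs_nonneg _) (le_max_left _ _) he
          nlinarith
        have hDm : (D^α)^m * (M * D ^ (((q:ℝ) - m + 1) * α)) = M * D ^ (((q:ℝ)+1)*α) := by
          rw [← Real.rpow_natCast (D^α) m, ← Real.rpow_mul hD]
          have hsum : α * (m:ℝ) + ((q:ℝ) - (m:ℝ) + 1) * α = ((q:ℝ)+1)*α := by ring
          rw [mul_left_comm, ← Real.rpow_add' hD (by rw [hsum]; positivity), hsum]
        calc (1/(m.factorial:ℝ)) * |(x t - x u)^m| * |_|
            ≤ (1/(m.factorial:ℝ)) * (Cx^m * (D^α)^m) * (M * D ^ (((q:ℝ) - m + 1) * α)) := by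
              apply mul_le_mul
              · apply mul_le_mul_of_nonneg_left hb (by positivity)
              · exact hr
              · exact abs_nonneg _
              · positivity
          _ = (1/(m.factorial:ℝ)) * Cx^m * M * D ^ (((q:ℝ)+1)*α) := by
              linear_combination (1/(m.factorial:ℝ)) * Cx^m * hDm
    _ = (∑ m ∈ Finset.Icc 1 q, (1/(m.factorial:ℝ)) * Cx^m * M) * D ^ (((q:ℝ)+1)*α) := by
        rw [← Finset.sum_mul]

lemma ratio_bound (θ : ℝ) (hθ : 1 < θ) (m m1 m2 : ℕ) (hm : 2 ≤ m) (h12 : m1 + m2 = m)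
    (h21 : m2 ≤ m1) (h34 : 4 * m1 ≤ 3 * m) (hm2 : 1 ≤ m2) :
    (m1:ℝ)^θ + (m2:ℝ)^θ ≤ (3/4:ℝ)^(θ-1) * (m:ℝ)^θ := by
  have hm1p : (0:ℝ) < m1 := by exact_mod_cast (by omega : 0 < m1)
  have hm2p : (0:ℝ) < m2 := by exact_mod_cast (by omega : 0 < m2)
  have hmp : (0:ℝ) < m := by exact_mod_cast (by omega : 0 < m)
  have hθ1 : (0:ℝ) ≤ θ - 1 := by linarith
  have key : ∀ y : ℝ, 0 < y → y^θ = y * y^(θ-1) := by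
    intro y hy
    conv_lhs => rw [show θ = 1 + (θ-1) from by ring]
    rw [Real.rpow_add hy, Real.rpow_one]
  have h34R : (m1:ℝ) ≤ 3/4 * m := by
    have : (4:ℝ) * m1 ≤ 3 * m := by exact_mod_cast h34
    linarith
  have b1 : (m1:ℝ)^(θ-1) ≤ ((3/4:ℝ)*m)^(θ-1) := Real.rpow_le_rpow hm1p.le h34R hθ1
  have b2 : (m2:ℝ)^(θ-1) ≤ ((3/4:ℝ)*m)^(θ-1) := by
    refine Real.rpow_le_rpow hm2p.le (le_trans ?_ h34R) hθ1
    exact_mod_cast h21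
  have hsplitm : ((3/4:ℝ)*m)^(θ-1) = (3/4:ℝ)^(θ-1) * (m:ℝ)^(θ-1) :=
    Real.mul_rpow (by norm_num) hmp.le
  have hm12 : (m1:ℝ) + m2 = m := by exact_mod_cast h12
  calc (m1:ℝ)^θ + (m2:ℝ)^θ = m1 * (m1:ℝ)^(θ-1) + m2 * (m2:ℝ)^(θ-1) := by
        rw [key _ hm1p, key _ hm2p]
    _ ≤ m1 * ((3/4:ℝ)*m)^(θ-1) + m2 * ((3/4:ℝ)*m)^(θ-1) :=
        add_le_add (mul_le_mul_of_nonneg_left b1 hm1p.le) (mul_le_mul_of_nonneg_left b2 hm2p.le)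
    _ = (3/4:ℝ)^(θ-1) * ((m:ℝ) * (m:ℝ)^(θ-1)) := by
        rw [hsplitm]; linear_combination ((3:ℝ)/4)^(θ-1) * (m:ℝ)^(θ-1) * hm12
    _ = (3/4:ℝ)^(θ-1) * (m:ℝ)^θ := by rw [← key _ hmp]

lemma uniform_sum_bound (T θ C : ℝ) (hC : 0 ≤ C) (hθ : 1 < θ)
    (Ξ : ℝ → ℝ → ℝ) (hΞ0 : ∀ s, Ξ s s = 0)
    (hδ : ∀ s ∈ Icc (0:ℝ) T, ∀ u ∈ Icc (0:ℝ) T, ∀ t ∈ Icc (0:ℝ) T, s ≤ u → u ≤ t →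
      |Ξ s t - Ξ s u - Ξ u t| ≤ C * (t - s)^θ) :
    ∀ m : ℕ, ∀ p h : ℝ, 0 ≤ p → 0 ≤ h → p + m*h ≤ T →
      |(∑ i ∈ Finset.range m, Ξ (p + i*h) (p + (i+1)*h)) - Ξ p (p + m*h)|
        ≤ (C/(1-(3/4:ℝ)^(θ-1))) * ((m:ℝ)*h)^θ := by
  set ρ : ℝ := (3/4:ℝ)^(θ-1) with hρdef
  have hρ1 : ρ < 1 := Real.rpow_lt_one (by norm_num) (by norm_num) (by linarith)
  have hρ0 : 0 ≤ ρ := Real.rpow_nonneg (by norm_num) _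
  set K : ℝ := C/(1-ρ) with hKdef
  have hK0 : 0 ≤ K := div_nonneg hC (by linarith)
  have h1ρ : (1:ℝ) - ρ ≠ 0 := by linarith
  have hKeq : K * ρ + C = K := by
    have h1 : K * (1-ρ) = C := by rw [hKdef]; exact div_mul_cancel₀ C h1ρ
    have h2 : K * (1-ρ) = K - K*ρ := by ring
    linarith
  intro m
  induction m using Nat.strong_induction_on with
  | _ m ih =>
    intro p h hp hh hpm
    match m, ih, hpm with
    | 0, ih, hpm =>
      simp only [Finset.range_zero, Finset.sum_empty, Nat.cast_zero, zero_mul, add_zero,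
        hΞ0, zero_sub, abs_neg, abs_zero]
      positivity
    | 1, ih, hpm =>
      simp only [Finset.range_one, Finset.sum_singleton, Nat.cast_zero, Nat.cast_one, zero_mul,
        add_zero, zero_add, sub_self, abs_zero]
      positivity
    | (n+2), ih, hpm =>
      set m : ℕ := n + 2 with hmdef
      set m1 : ℕ := (m+1)/2 with hm1def
      set m2 : ℕ := m - m1 with hm2def
      have hn1 : m1 + m2 = m := by omega
      have hn2 : 1 ≤ m2 := by omega
      have hn3 : m2 ≤ m1 := by omega
      have hn4 : 4 * m1 ≤ 3 * m := by omega
      have hn5 : m1 < m := by omega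
      have hn6 : m2 < m := by omega
      have hmcast : (m1:ℝ) + (m2:ℝ) = (m:ℝ) := by exact_mod_cast hn1
      have hm1T : p + (m1:ℝ)*h ≤ T := by
        refine le_trans ?_ hpm
        have : (m1:ℝ) ≤ (m:ℝ) := by exact_mod_cast hn5.le
        nlinarith
      have hp1 : 0 ≤ p + (m1:ℝ)*h := by positivity
      have epm : (p + (m1:ℝ)*h) + (m2:ℝ)*h = p + (m:ℝ)*h := by
        linear_combination h * hmcast
      have hm2T : (p + (m1:ℝ)*h) + (m2:ℝ)*h ≤ T := by rw [epm]; exact hpm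
      have IH1 := ih m1 hn5 p h hp hh hm1T
      have IH2 := ih m2 hn6 (p + (m1:ℝ)*h) h hp1 hh hm2T
      rw [epm] at IH2
      have hsum : ∑ i ∈ Finset.range m, Ξ (p + i*h) (p + (i+1)*h)
          = (∑ i ∈ Finset.range m1, Ξ (p + i*h) (p + (i+1)*h))
            + ∑ i ∈ Finset.range m2, Ξ ((p + (m1:ℝ)*h) + i*h) ((p + (m1:ℝ)*h) + (i+1)*h) := by
        rw [show m = m1 + m2 from hn1.symm, Finset.sum_range_add]
        congr 1
        apply Finset.sum_congr rfl
        intro i _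
        congr 1 <;> push_cast <;> ring
      have hmh0 : 0 ≤ (m:ℝ)*h := by positivity
      have hδ1 : |Ξ p (p + (m:ℝ)*h) - Ξ p (p + (m1:ℝ)*h) - Ξ (p + (m1:ℝ)*h) (p + (m:ℝ)*h)|
          ≤ C * ((m:ℝ)*h)^θ := by
        have hx1 : p ∈ Icc (0:ℝ) T := ⟨hp, by nlinarith⟩
        have hx2 : p + (m1:ℝ)*h ∈ Icc (0:ℝ) T := ⟨hp1, hm1T⟩
        have hx3 : p + (m:ℝ)*h ∈ Icc (0:ℝ) T := ⟨by positivity, hpm⟩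
        have hle1 : p ≤ p + (m1:ℝ)*h := le_add_of_nonneg_right (by positivity)
        have hle2 : p + (m1:ℝ)*h ≤ p + (m:ℝ)*h := by
          have h2R : (0:ℝ) ≤ (m2:ℝ) := by positivity
          nlinarith
        have := hδ p hx1 _ hx2 _ hx3 hle1 hle2
        rwa [show p + (m:ℝ)*h - p = (m:ℝ)*h from by ring] at this
      rw [hsum]
      have etri : (∑ i ∈ Finset.range m1, Ξ (p + i*h) (p + (i+1)*h))
            + (∑ i ∈ Finset.range m2, Ξ ((p + (m1:ℝ)*h) + i*h) ((p + (m1:ℝ)*h) + (i+1)*h))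
            - Ξ p (p + (m:ℝ)*h)
          = ((∑ i ∈ Finset.range m1, Ξ (p + i*h) (p + (i+1)*h)) - Ξ p (p + (m1:ℝ)*h))
            + ((∑ i ∈ Finset.range m2, Ξ ((p + (m1:ℝ)*h) + i*h) ((p + (m1:ℝ)*h) + (i+1)*h))
                - Ξ (p + (m1:ℝ)*h) (p + (m:ℝ)*h))
            + (-(Ξ p (p + (m:ℝ)*h) - Ξ p (p + (m1:ℝ)*h) - Ξ (p + (m1:ℝ)*h) (p + (m:ℝ)*h))) := by
        ring
      rw [etri]
      have hmr : ((m:ℝ)*h)^θ = (m:ℝ)^θ * h^θ := Real.mul_rpow (by positivity) hh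
      have hmr1 : ((m1:ℝ)*h)^θ = (m1:ℝ)^θ * h^θ := Real.mul_rpow (by positivity) hh
      have hmr2 : ((m2:ℝ)*h)^θ = (m2:ℝ)^θ * h^θ := Real.mul_rpow (by positivity) hh
      have hratio := ratio_bound θ hθ m m1 m2 (by omega) hn1 hn3 hn4 hn2
      calc |_ + _ + _| ≤ |_| + |_| + |_| :=
            (abs_add_le _ _).trans (add_le_add (abs_add_le _ _) le_rfl)
        _ ≤ K*((m1:ℝ)*h)^θ + K*((m2:ℝ)*h)^θ + C*((m:ℝ)*h)^θ := by
            rw [abs_neg]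
            exact add_le_add (add_le_add IH1 IH2) hδ1
        _ = (K*((m1:ℝ)^θ + (m2:ℝ)^θ) + C*(m:ℝ)^θ) * h^θ := by
            rw [hmr, hmr1, hmr2]; ring
        _ ≤ (K*(ρ*(m:ℝ)^θ) + C*(m:ℝ)^θ) * h^θ := by
            apply mul_le_mul_of_nonneg_right _ (Real.rpow_nonneg hh θ)
            have := mul_le_mul_of_nonneg_left hratio hK0
            linarith
        _ = K * ((m:ℝ)^θ * h^θ) := by linear_combination (m:ℝ)^θ * h^θ * hKeq
        _ = K * ((m:ℝ)*h)^θ := by rw [hmr]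

theorem sewing (T θ C : ℝ) (hT : 0 < T) (hθ : 1 < θ) (hC : 0 ≤ C)
    (Ξ : ℝ → ℝ → ℝ) (hΞ0 : ∀ s, Ξ s s = 0)
    (hδ : ∀ s ∈ Icc (0:ℝ) T, ∀ u ∈ Icc (0:ℝ) T, ∀ t ∈ Icc (0:ℝ) T, s ≤ u → u ≤ t →
      |Ξ s t - Ξ s u - Ξ u t| ≤ C * (t - s)^θ) :
    ∃ I : ℝ → ℝ, I 0 = 0 ∧ ∃ K : ℝ, 0 ≤ K ∧ ∀ s ∈ Icc (0:ℝ) T, ∀ t ∈ Icc (0:ℝ) T, s ≤ t →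
      |I t - I s - Ξ s t| ≤ K * (t - s)^θ := by
  have hθ0 : 0 < θ := by linarith
  -- grid and floor
  set τ : ℕ → ℕ → ℝ := fun n i => (i:ℝ) * (T/2^n) with hτdef
  set kk : ℕ → ℝ → ℕ := fun n t => ⌊t * 2^n / T⌋₊ with hkdef
  have h2n : ∀ n:ℕ, (0:ℝ) < 2^n := fun n => by positivity
  have hh0 : ∀ n:ℕ, (0:ℝ) < T/2^n := fun n => by positivity
  have hynn : ∀ (n:ℕ) (t:ℝ), 0 ≤ t → (0:ℝ) ≤ t*2^n/T := by
    intro n t ht; positivity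
  have hyt : ∀ (n:ℕ) (t:ℝ), t*2^n/T * (T/2^n) = t := by
    intro n t; field_simp
  have hfl1 : ∀ (n:ℕ) (t:ℝ), 0 ≤ t → τ n (kk n t) ≤ t := by
    intro n t ht
    have h1 : ((kk n t : ℕ):ℝ) ≤ t*2^n/T := Nat.floor_le (hynn n t ht)
    have := mul_le_mul_of_nonneg_right h1 (hh0 n).le
    rw [hyt n t] at this
    exact this
  have hfl2 : ∀ (n:ℕ) (t:ℝ), 0 ≤ t → t < τ n (kk n t + 1) := by
    intro n t ht
    have h1 : t*2^n/T < ((kk n t : ℕ):ℝ) + 1 := Nat.lt_floor_add_one _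
    have := mul_lt_mul_of_pos_right h1 (hh0 n)
    rw [hyt n t] at this
    refine this.trans_le (le_of_eq ?_)
    simp only [hτdef]
    push_cast; ring
  have hfl3 : ∀ (n:ℕ) (t:ℝ), t ≤ T → kk n t ≤ 2^n := by
    intro n t ht
    have h1 : t*2^n/T ≤ ((2^n : ℕ):ℝ) := by
      rw [div_le_iff₀ hT]
      push_cast
      nlinarith [h2n n]
    calc kk n t ≤ ⌊((2^n : ℕ):ℝ)⌋₊ := Nat.floor_le_floor h1
      _ = 2^n := Nat.floor_natCast _
  have hτmem : ∀ (n:ℕ) (i:ℕ), i ≤ 2^n → τ n i ∈ Icc (0:ℝ) T := by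
    intro n i hi
    constructor
    · positivity
    · have hiR : (i:ℝ) ≤ (2:ℝ)^n := by exact_mod_cast hi
      calc (i:ℝ) * (T/2^n) ≤ (2:ℝ)^n * (T/2^n) := by nlinarith [hh0 n]
        _ = T := by field_simp
  have hτmono : ∀ (n:ℕ) (i j:ℕ), i ≤ j → τ n i ≤ τ n j := by
    intro n i j hij
    have : (i:ℝ) ≤ (j:ℝ) := by exact_mod_cast hij
    have := hh0 n
    simp only [hτdef]
    nlinarith
  have hτsucc : ∀ (n:ℕ) (i:ℕ), τ (n+1) (2*i) = τ n i := by
    intro n i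
    simp only [hτdef]
    push_cast [pow_succ]
    ring
  have hkmono : ∀ (n:ℕ) (s t:ℝ), 0 ≤ s → s ≤ t → kk n s ≤ kk n t := by
    intro n s t hs hst
    apply Nat.floor_le_floor
    have h2 := h2n n
    gcongr
  have hk2 : ∀ (n:ℕ) (t:ℝ), 0 ≤ t → kk (n+1) t = 2 * kk n t ∨ kk (n+1) t = 2 * kk n t + 1 := by
    intro n t ht
    have hy2 : t*2^(n+1)/T = 2*(t*2^n/T) := by rw [pow_succ]; ring
    have h1 : 2 * kk n t ≤ kk (n+1) t := by
      apply Nat.le_floor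
      rw [hy2]
      push_cast
      nlinarith [Nat.floor_le (hynn n t ht)]
    have h2 : kk (n+1) t < 2 * kk n t + 2 := by
      rw [hkdef]
      apply Nat.floor_lt (hynn (n+1) t ht) |>.mpr
      rw [hy2]
      push_cast
      nlinarith [Nat.lt_floor_add_one (t*2^n/T)]
    omega
  -- the prelimit functions
  set J : ℕ → ℝ → ℝ := fun n t =>
    (∑ i ∈ Finset.range (kk n t), Ξ (τ n i) (τ n (i+1))) + Ξ (τ n (kk n t)) t with hJdef
  set r : ℝ := (2:ℝ)^(1-θ) with hrdef
  have hr0 : 0 ≤ r := Real.rpow_nonneg (by norm_num) _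
  have hr1 : r < 1 := Real.rpow_lt_one_of_one_lt_of_neg (by norm_num) (by linarith)
  have pow_eq : ∀ n : ℕ, ((2:ℝ)^n) * (T/2^n)^θ = T^θ * r^n := by
    intro n
    have h2nn : (0:ℝ) < (2:ℝ)^n := h2n n
    have e0 : (T/2^n)^θ = T^θ / ((2:ℝ)^n)^θ := Real.div_rpow hT.le h2nn.le θ
    have e2 : ((2:ℝ)^n)^θ = ((2:ℝ)^θ)^n := by
      rw [← Real.rpow_natCast (2:ℝ) n, ← Real.rpow_natCast ((2:ℝ)^θ) n,
          ← Real.rpow_mul (by norm_num), ← Real.rpow_mul (by norm_num), mul_comm]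
    have e3 : r * (2:ℝ)^θ = 2 := by
      rw [hrdef, ← Real.rpow_add (by norm_num : (0:ℝ)<2)]
      norm_num
    have e4 : (0:ℝ) < ((2:ℝ)^θ)^n := pow_pos (Real.rpow_pos_of_pos (by norm_num) θ) n
    have e5 : (2:ℝ)^n = r^n * ((2:ℝ)^θ)^n := by rw [← mul_pow, e3]
    rw [e0, e2, e5]
    field_simp
  -- step estimate
  have hstep : ∀ (n:ℕ), ∀ t ∈ Icc (0:ℝ) T, |J (n+1) t - J n t| ≤ (2*C*T^θ) * r^n := by
    intro n t htm
    obtain ⟨ht0, htT⟩ := htm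
    set a := kk n t with hadef
    have ha2 : a ≤ 2^n := hfl3 n t htT
    have hpair : ∀ j, j < a →
        (Ξ (τ (n+1) (2*j)) (τ (n+1) (2*j+1)) + Ξ (τ (n+1) (2*j+1)) (τ (n+1) (2*j+1+1)))
          - Ξ (τ n j) (τ n (j+1))
        = -(Ξ (τ n j) (τ n (j+1)) - Ξ (τ n j) (τ (n+1) (2*j+1)) - Ξ (τ (n+1) (2*j+1)) (τ n (j+1))) := by
      intro j hj
      rw [hτsucc n j, show 2*j+1+1 = 2*(j+1) from by ring, hτsucc n (j+1)]
      ring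
    have hδpair : ∀ j, j < a →
        |Ξ (τ n j) (τ n (j+1)) - Ξ (τ n j) (τ (n+1) (2*j+1)) - Ξ (τ (n+1) (2*j+1)) (τ n (j+1))|
          ≤ C * (T/2^n)^θ := by
      intro j hj
      have hj1 : j + 1 ≤ 2^n := by omega
      have hm1 := hτmem n j (by omega)
      have hm2 := hτmem (n+1) (2*j+1) (by simp [pow_succ]; omega)
      have hm3 := hτmem n (j+1) hj1
      have ho1 : τ n j ≤ τ (n+1) (2*j+1) := by
        rw [← hτsucc n j]; exact hτmono (n+1) _ _ (by omega)
      have ho2 : τ (n+1) (2*j+1) ≤ τ n (j+1) := by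
        rw [← hτsucc n (j+1)]; exact hτmono (n+1) _ _ (by omega)
      refine (hδ _ hm1 _ hm2 _ hm3 ho1 ho2).trans ?_
      have : τ n (j+1) - τ n j = T/2^n := by simp only [hτdef]; push_cast; ring
      rw [this]
    have hsum_bound : |∑ j ∈ Finset.range a,
          -(Ξ (τ n j) (τ n (j+1)) - Ξ (τ n j) (τ (n+1) (2*j+1)) - Ξ (τ (n+1) (2*j+1)) (τ n (j+1)))|
        ≤ (2:ℝ)^n * (C * (T/2^n)^θ) := by
      refine (Finset.abs_sum_le_sum_abs _ _).trans ?_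
      have h1 : ∑ j ∈ Finset.range a,
            |(-(Ξ (τ n j) (τ n (j+1)) - Ξ (τ n j) (τ (n+1) (2*j+1)) - Ξ (τ (n+1) (2*j+1)) (τ n (j+1))))|
          ≤ ∑ _j ∈ Finset.range a, (C * (T/2^n)^θ) :=
        Finset.sum_le_sum (fun j hj => by
          rw [abs_neg]; exact hδpair j (Finset.mem_range.mp hj))
      refine h1.trans ?_
      rw [Finset.sum_const, Finset.card_range, nsmul_eq_mul]
      have haR : (a:ℝ) ≤ (2:ℝ)^n := by exact_mod_cast ha2
      have : (0:ℝ) ≤ C * (T/2^n)^θ := by positivity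
      nlinarith
    rcases hk2 n t ht0 with hcase | hcase
    · have hJ1 : J (n+1) t - J n t = ∑ j ∈ Finset.range a,
          -(Ξ (τ n j) (τ n (j+1)) - Ξ (τ n j) (τ (n+1) (2*j+1)) - Ξ (τ (n+1) (2*j+1)) (τ n (j+1))) := by
        simp only [hJdef]
        rw [hcase, ← hadef, sum_pair (fun i => Ξ (τ (n+1) i) (τ (n+1) (i+1))) a, hτsucc n a]
        have hs := Finset.sum_congr rfl (fun j hj => hpair j (Finset.mem_range.mp hj))
        rw [Finset.sum_sub_distrib] at hs
        linarith [hs]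
      rw [hJ1]
      refine hsum_bound.trans ?_
      rw [show (2:ℝ)^n * (C * (T/2^n)^θ) = C * ((2:ℝ)^n * (T/2^n)^θ) from by ring, pow_eq n]
      have : (0:ℝ) ≤ C * T^θ * r^n := by positivity
      nlinarith
    · -- k_{n+1} = 2a+1
      have h2a1 : 2*a+1 ≤ 2^(n+1) := by
        have := hfl3 (n+1) t htT
        omega
      have hJ1 : J (n+1) t - J n t = (∑ j ∈ Finset.range a,
          -(Ξ (τ n j) (τ n (j+1)) - Ξ (τ n j) (τ (n+1) (2*j+1)) - Ξ (τ (n+1) (2*j+1)) (τ n (j+1))))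
          + (-(Ξ (τ n a) t - Ξ (τ n a) (τ (n+1) (2*a+1)) - Ξ (τ (n+1) (2*a+1)) t)) := by
        simp only [hJdef]
        rw [hcase, ← hadef, Finset.sum_range_succ, sum_pair (fun i => Ξ (τ (n+1) i) (τ (n+1) (i+1))) a]
        have hs := Finset.sum_congr rfl (fun j hj => hpair j (Finset.mem_range.mp hj))
        rw [Finset.sum_sub_distrib] at hs
        rw [hτsucc n a]
        linarith [hs]
      rw [hJ1]
      have hlast : |Ξ (τ n a) t - Ξ (τ n a) (τ (n+1) (2*a+1)) - Ξ (τ (n+1) (2*a+1)) t|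
          ≤ C * (T/2^n)^θ := by
        have hm1 := hτmem n a ha2
        have hm2 := hτmem (n+1) (2*a+1) h2a1
        have hm3 : t ∈ Icc (0:ℝ) T := ⟨ht0, htT⟩
        have ho1 : τ n a ≤ τ (n+1) (2*a+1) := by
          rw [← hτsucc n a]; exact hτmono (n+1) _ _ (by omega)
        have ho2 : τ (n+1) (2*a+1) ≤ t := by
          rw [← hcase]; exact hfl1 (n+1) t ht0
        refine (hδ _ hm1 _ hm2 _ hm3 ho1 ho2).trans ?_
        have h1 : t - τ n a ≤ T/2^n := by
          have := hfl2 n t ht0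
          have h2 : τ n (a+1) = τ n a + T/2^n := by simp only [hτdef]; push_cast; ring
          rw [← hadef] at this
          nlinarith [this, h2]
        have h2 : 0 ≤ t - τ n a := by
          have := hfl1 n t ht0
          rw [← hadef] at this
          linarith
        have := Real.rpow_le_rpow h2 h1 hθ0.le
        nlinarith [this]
      refine (abs_add_le _ _).trans ?_
      rw [abs_neg]
      refine add_le_add hsum_bound hlast |>.trans ?_
      rw [show (2:ℝ)^n * (C * (T/2^n)^θ) + C * (T/2^n)^θ = C * ((2:ℝ)^n * (T/2^n)^θ) + C * ((T/2^n)^θ) from by ring, pow_eq n]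
      have hp := pow_eq n
      have h2n1 : (1:ℝ) ≤ (2:ℝ)^n := one_le_pow₀ (by norm_num : (1:ℝ) ≤ 2)
      have hnn : (0:ℝ) ≤ (T/2^n)^θ := Real.rpow_nonneg (by positivity) _
      have hX : (T/2^n)^θ ≤ T^θ * r^n := by
        nlinarith [mul_nonneg (sub_nonneg.mpr h2n1) hnn]
      have hb : C*(T/2^n)^θ ≤ C*(T^θ*r^n) := mul_le_mul_of_nonneg_left hX hC
      nlinarith [hb]
  -- geometric comparison for the tail term
  have hTn_le : ∀ n:ℕ, C*(T/2^n)^θ ≤ C*(T^θ*r^n) := by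
    intro n
    have hp := pow_eq n
    have h2n1 : (1:ℝ) ≤ (2:ℝ)^n := one_le_pow₀ (by norm_num : (1:ℝ) ≤ 2)
    have hnn : (0:ℝ) ≤ (T/2^n)^θ := Real.rpow_nonneg (by positivity) _
    have hX : (T/2^n)^θ ≤ T^θ * r^n := by
      nlinarith [mul_nonneg (sub_nonneg.mpr h2n1) hnn]
    exact mul_le_mul_of_nonneg_left hX hC
  -- convergence
  have hcauchy : ∀ t ∈ Icc (0:ℝ) T, ∃ LL, Tendsto (fun n => J n t) atTop (𝓝 LL) := by
    intro t ht
    apply cauchySeq_tendsto_of_complete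
    apply cauchySeq_of_le_geometric r (2*C*T^θ) hr1
    intro n
    rw [Real.dist_eq, abs_sub_comm]
    exact hstep n t ht
  choose! L hL using hcauchy
  refine ⟨L, ?_, ?_⟩
  · have h0m : (0:ℝ) ∈ Icc (0:ℝ) T := ⟨le_refl _, hT.le⟩
    have hJ0 : ∀ n, J n 0 = 0 := by
      intro n
      simp only [hJdef]
      have hk0 : kk n 0 = 0 := by simp [hkdef]
      have hτ0 : τ n 0 = 0 := by simp [hτdef]
      rw [hk0, hτ0]
      simp [hΞ0]
    have h1 := hL 0 h0m
    rw [show (fun n => J n 0) = (fun _ => (0:ℝ)) from funext hJ0] at h1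
    exact (tendsto_nhds_unique h1 tendsto_const_nhds)
  · set KU : ℝ := C/(1-(3/4:ℝ)^(θ-1)) with hKUdef
    have hKU0 : 0 ≤ KU := by
      apply div_nonneg hC
      have : (3/4:ℝ)^(θ-1) < 1 := Real.rpow_lt_one (by norm_num) (by norm_num) (by linarith)
      linarith
    refine ⟨KU + 2*C, by linarith, ?_⟩
    intro s hs t ht hst
    have husb := uniform_sum_bound T θ C hC hθ Ξ hΞ0 hδ
    have hn_bound : ∀ n:ℕ, |J n t - J n s - Ξ s t| ≤ (KU + 2*C) * (t-s)^θ + C * (T/2^n)^θ := by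
      intro n
      obtain ⟨hs0, hsT⟩ := hs
      obtain ⟨ht0, htT⟩ := ht
      set a := kk n s with hadef
      set b := kk n t with hbdef
      have hab : a ≤ b := hkmono n s t hs0 hst
      have hts0 : 0 ≤ t - s := by linarith
      have htsθ : (0:ℝ) ≤ (t-s)^θ := Real.rpow_nonneg hts0 _
      have hKC : (0:ℝ) ≤ (KU + 2*C) * (t-s)^θ := mul_nonneg (by linarith) htsθ
      have hhn : (0:ℝ) ≤ (T/2^n)^θ := Real.rpow_nonneg (hh0 n).le _
      have hτas : τ n a ≤ s := hfl1 n s hs0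
      have hsa1 : s < τ n (a+1) := hfl2 n s hs0
      have hτbt : τ n b ≤ t := hfl1 n t ht0
      have htb1 : t < τ n (b+1) := hfl2 n t ht0
      have hb2 : b ≤ 2^n := hfl3 n t htT
      have hτaS : τ n a ∈ Icc (0:ℝ) T := hτmem n a (by omega)
      have hsm : s ∈ Icc (0:ℝ) T := ⟨hs0, hsT⟩
      have htm : t ∈ Icc (0:ℝ) T := ⟨ht0, htT⟩
      rcases Nat.eq_or_lt_of_le hab with heq | hlt
      · have hJdiff : J n t - J n s = Ξ (τ n a) t - Ξ (τ n a) s := by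
          simp only [hJdef]
          rw [← hadef, ← hbdef, ← heq]
          ring
        have hgap : τ n (a+1) = τ n a + T/2^n := by
          simp only [hτdef]; push_cast; ring
        have hδ0 := hδ (τ n a) hτaS s hsm t htm hτas hst
        have hle : t - τ n a ≤ T/2^n := by
          have : t < τ n (a+1) := by rw [heq]; exact htb1
          rw [hgap] at this
          linarith
        have h0le : 0 ≤ t - τ n a := by linarith
        have hmono := Real.rpow_le_rpow h0le hle hθ0.le
        have : |J n t - J n s - Ξ s t| ≤ C * (T/2^n)^θ := by
          rw [hJdiff]
          calc |Ξ (τ n a) t - Ξ (τ n a) s - Ξ s t| ≤ C * (t - τ n a)^θ := hδ0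
            _ ≤ C * (T/2^n)^θ := mul_le_mul_of_nonneg_left hmono hC
        linarith
      · set m := b - (a+1) with hmdef
        have hbm : b = a + (m+1) := by omega
        have hbR : (b:ℝ) = (a:ℝ) + (m:ℝ) + 1 := by exact_mod_cast congrArg (Nat.cast (R:=ℝ)) hbm
        have ha1b : a + 1 ≤ b := by omega
        have hτa1S : τ n (a+1) ∈ Icc (0:ℝ) T := hτmem n (a+1) (by omega)
        have hτbS : τ n b ∈ Icc (0:ℝ) T := hτmem n b hb2
        have hτa1b : τ n (a+1) ≤ τ n b := hτmono n _ _ ha1b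
        have hτa1t : τ n (a+1) ≤ t := le_trans hτa1b hτbt
        have hgap : τ n (a+1) = τ n a + T/2^n := by
          simp only [hτdef]; push_cast; ring
        have hsplit : ∑ i ∈ Finset.range b, Ξ (τ n i) (τ n (i+1))
            = ∑ i ∈ Finset.range a, Ξ (τ n i) (τ n (i+1))
              + (Ξ (τ n a) (τ n (a+1)) + ∑ i ∈ Finset.range m, Ξ (τ n (a+1+i)) (τ n (a+1+i+1))) := by
          rw [hbm, Finset.sum_range_add]
          congr 1
          rw [Finset.sum_range_succ' (fun i => Ξ (τ n (a+i)) (τ n (a+i+1))) m]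
          rw [add_comm]
          congr 1
          apply Finset.sum_congr rfl
          intro i _
          congr 2 <;> omega
        have hmid0 := husb m (τ n (a+1)) (T/2^n)
          (by simp only [hτdef]; positivity) (hh0 n).le
          (by
            have e3 : τ n (a+1) + (m:ℝ)*(T/2^n) = τ n b := by
              simp only [hτdef]; rw [hbR]; push_cast; ring
            rw [e3]
            exact le_trans hτbt htT)
        have hmid : |∑ i ∈ Finset.range m, Ξ (τ n (a+1+i)) (τ n (a+1+i+1))
              - Ξ (τ n (a+1)) (τ n b)| ≤ KU * ((m:ℝ)*(T/2^n))^θ := by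
          have e2 : ∑ i ∈ Finset.range m,
                Ξ (τ n (a+1) + i*(T/2^n)) (τ n (a+1) + (i+1)*(T/2^n))
              = ∑ i ∈ Finset.range m, Ξ (τ n (a+1+i)) (τ n (a+1+i+1)) :=
            Finset.sum_congr rfl (fun i _ => by
              congr 1 <;> (simp only [hτdef]; push_cast; ring))
          have e3 : τ n (a+1) + (m:ℝ)*(T/2^n) = τ n b := by
            simp only [hτdef]; rw [hbR]; push_cast; ring
          rw [e2, e3] at hmid0
          exact hmid0
        have hmh_le : (m:ℝ)*(T/2^n) ≤ t - s := by
          have e3 : τ n (a+1) + (m:ℝ)*(T/2^n) = τ n b := by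
            simp only [hτdef]; rw [hbR]; push_cast; ring
          have := hsa1
          nlinarith [hτbt]
        have hmh0 : (0:ℝ) ≤ (m:ℝ)*(T/2^n) := by positivity
        have hmid2 : |∑ i ∈ Finset.range m, Ξ (τ n (a+1+i)) (τ n (a+1+i+1))
              - Ξ (τ n (a+1)) (τ n b)| ≤ KU * (t-s)^θ := by
          refine hmid.trans (mul_le_mul_of_nonneg_left ?_ hKU0)
          exact Real.rpow_le_rpow hmh0 hmh_le hθ0.le
        have hE1 : |Ξ (τ n a) (τ n (a+1)) - Ξ (τ n a) s - Ξ s (τ n (a+1))| ≤ C * (T/2^n)^θ := by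
          have := hδ (τ n a) hτaS s hsm (τ n (a+1)) hτa1S hτas hsa1.le
          rw [hgap] at this ⊢
          calc _ ≤ C * (τ n a + T/2^n - τ n a)^θ := this
            _ = C * (T/2^n)^θ := by ring_nf
        have hE3 : |Ξ s t - Ξ s (τ n (a+1)) - Ξ (τ n (a+1)) t| ≤ C * (t-s)^θ :=
          hδ s hsm (τ n (a+1)) hτa1S t htm hsa1.le hτa1t
        have hE4 : |Ξ (τ n (a+1)) t - Ξ (τ n (a+1)) (τ n b) - Ξ (τ n b) t| ≤ C * (t-s)^θ := by
          refine (hδ (τ n (a+1)) hτa1S (τ n b) hτbS t htm hτa1b hτbt).trans ?_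
          refine mul_le_mul_of_nonneg_left ?_ hC
          refine Real.rpow_le_rpow (by linarith) (by linarith [hsa1]) hθ0.le
        have hid : J n t - J n s - Ξ s t
            = (Ξ (τ n a) (τ n (a+1)) - Ξ (τ n a) s - Ξ s (τ n (a+1)))
              + (∑ i ∈ Finset.range m, Ξ (τ n (a+1+i)) (τ n (a+1+i+1)) - Ξ (τ n (a+1)) (τ n b))
              + (-(Ξ s t - Ξ s (τ n (a+1)) - Ξ (τ n (a+1)) t))
              + (-(Ξ (τ n (a+1)) t - Ξ (τ n (a+1)) (τ n b) - Ξ (τ n b) t)) := by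
          simp only [hJdef]
          rw [← hadef, ← hbdef, hsplit]
          ring
        rw [hid]
        have tri : ∀ w x y z : ℝ, |w + x + y + z| ≤ |w| + |x| + |y| + |z| := by
          intro w x y z
          calc |w + x + y + z| ≤ |w + x + y| + |z| := abs_add_le _ _
            _ ≤ (|w + x| + |y|) + |z| := add_le_add (abs_add_le _ _) le_rfl
            _ ≤ ((|w| + |x|) + |y|) + |z| := by
                have := abs_add_le w x
                linarith
        refine (tri _ _ _ _).trans ?_
        rw [abs_neg, abs_neg]
        have := add_le_add (add_le_add (add_le_add hE1 hmid2) hE3) hE4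
        linarith
    have hlim1 : Tendsto (fun n => |J n t - J n s - Ξ s t|) atTop (𝓝 |L t - L s - Ξ s t|) :=
      (((hL t ht).sub (hL s hs)).sub tendsto_const_nhds).abs
    have hgeo : Tendsto (fun n:ℕ => C * (T/2^n)^θ) atTop (𝓝 0) := by
      apply squeeze_zero (fun n => by positivity) (fun n => hTn_le n)
      have h0 : Tendsto (fun n:ℕ => r^n) atTop (𝓝 0) :=
        tendsto_pow_atTop_nhds_zero_of_lt_one hr0 hr1
      have := h0.const_mul (C*T^θ)
      rw [mul_zero] at this
      refine this.congr (fun n => by ring)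
    have hlim2 : Tendsto (fun n:ℕ => (KU + 2*C) * (t-s)^θ + C * (T/2^n)^θ) atTop
        (𝓝 ((KU + 2*C) * (t-s)^θ + 0)) := tendsto_const_nhds.add hgeo
    have hfin := le_of_tendsto_of_tendsto' hlim1 hlim2 hn_bound
    rw [add_zero] at hfin
    exact hfin

/-- One-dimensional rough integral of a controlled path: existence and uniqueness
of a path `I` with `I₀ = 0`, `I ∈ C^α`, and
`I_t - I_s - ∑_{k=1}^q (1/k!) z^{(k)}_s (x_t - x_s)^k = O(|t-s|^{(q+1)α})`. -/
theorem stmt11 (T α : ℝ) (hT : 0 < T) (hα0 : 0 < α) (hα1 : α < 1)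
    (q : ℕ) (hq1 : 1 ≤ q) (hqα : 1 / ((q : ℝ) + 1) < α) (hαq : α ≤ 1 / (q : ℝ))
    (x : ℝ → ℝ)
    (hx : ∃ Cx : ℝ, ∀ s ∈ Icc (0 : ℝ) T, ∀ t ∈ Icc (0 : ℝ) T, |x t - x s| ≤ Cx * |t - s| ^ α)
    (z : ℕ → ℝ → ℝ)
    (hz : ∀ k : ℕ, 1 ≤ k → k ≤ q → ∃ Ck : ℝ, ∀ s ∈ Icc (0 : ℝ) T, ∀ t ∈ Icc (0 : ℝ) T,
      |z k t - z k s| ≤ Ck * |t - s| ^ α)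
    (hctrl : ∃ M : ℝ, ∀ k : ℕ, 1 ≤ k → k ≤ q → ∀ s ∈ Icc (0 : ℝ) T, ∀ t ∈ Icc (0 : ℝ) T,
      |z k t - z k s - ∑ j ∈ Finset.Icc 1 (q - k), (1 / (j.factorial : ℝ)) *
          z (k + j) s * (x t - x s) ^ j| ≤ M * |t - s| ^ (((q : ℝ) - k + 1) * α)) :
    (∃ I : ℝ → ℝ, I 0 = 0 ∧
      (∃ CI : ℝ, ∀ s ∈ Icc (0 : ℝ) T, ∀ t ∈ Icc (0 : ℝ) T, |I t - I s| ≤ CI * |t - s| ^ α) ∧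
      (∃ M' : ℝ, ∀ s ∈ Icc (0 : ℝ) T, ∀ t ∈ Icc (0 : ℝ) T,
        |I t - I s - ∑ k ∈ Finset.Icc 1 q, (1 / (k.factorial : ℝ)) *
            z k s * (x t - x s) ^ k| ≤ M' * |t - s| ^ (((q : ℝ) + 1) * α))) ∧
    (∀ I₁ I₂ : ℝ → ℝ, I₁ 0 = 0 → I₂ 0 = 0 →
      (∃ M' : ℝ, ∀ s ∈ Icc (0 : ℝ) T, ∀ t ∈ Icc (0 : ℝ) T,
        |I₁ t - I₁ s - ∑ k ∈ Finset.Icc 1 q, (1 / (k.factorial : ℝ)) *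
            z k s * (x t - x s) ^ k| ≤ M' * |t - s| ^ (((q : ℝ) + 1) * α)) →
      (∃ M' : ℝ, ∀ s ∈ Icc (0 : ℝ) T, ∀ t ∈ Icc (0 : ℝ) T,
        |I₂ t - I₂ s - ∑ k ∈ Finset.Icc 1 q, (1 / (k.factorial : ℝ)) *
            z k s * (x t - x s) ^ k| ≤ M' * |t - s| ^ (((q : ℝ) + 1) * α)) →
      ∀ t ∈ Icc (0 : ℝ) T, I₁ t = I₂ t) := by
  set θ : ℝ := ((q:ℝ)+1)*α with hθdef
  have hq0 : (0:ℝ) < (q:ℝ)+1 := by positivity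
  have hθ : 1 < θ := by
    rw [div_lt_iff₀ hq0] at hqα
    nlinarith
  have hθ0 : (0:ℝ) < θ := by linarith
  have hqR : (1:ℝ) ≤ (q:ℝ) := by exact_mod_cast hq1
  have hθα : α < θ := by nlinarith
  have h0m : (0:ℝ) ∈ Icc (0:ℝ) T := ⟨le_refl _, hT.le⟩
  have hTabs : ∀ s ∈ Icc (0:ℝ) T, ∀ t ∈ Icc (0:ℝ) T, |t - s| ≤ T := by
    intro s hs t ht
    rw [abs_le]
    constructor <;> [linarith [hs.2, ht.1]; linarith [hs.1, ht.2]]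
  constructor
  · -- existence
    obtain ⟨Cx0, hx0⟩ := hx
    set Cx : ℝ := max Cx0 0 with hCxdef
    have hCx : 0 ≤ Cx := le_max_right _ _
    have hx' : ∀ s ∈ Icc (0:ℝ) T, ∀ t ∈ Icc (0:ℝ) T, |x t - x s| ≤ Cx * |t - s| ^ α := by
      intro s hs t ht
      refine (hx0 s hs t ht).trans ?_
      have : (0:ℝ) ≤ |t - s|^α := Real.rpow_nonneg (abs_nonneg _) _
      nlinarith [le_max_left Cx0 (0:ℝ)]
    obtain ⟨M0, hM0⟩ := hctrl
    set M : ℝ := max M0 0 with hMdef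
    have hM : 0 ≤ M := le_max_right _ _
    have hctrl' : ∀ k : ℕ, 1 ≤ k → k ≤ q → ∀ s ∈ Icc (0:ℝ) T, ∀ t ∈ Icc (0:ℝ) T,
        |z k t - z k s - ∑ j ∈ Finset.Icc 1 (q - k), (1 / (j.factorial : ℝ)) *
            z (k + j) s * (x t - x s) ^ j| ≤ M * |t - s| ^ (((q : ℝ) - k + 1) * α) := by
      intro k h1 h2 s hs t ht
      refine (hM0 k h1 h2 s hs t ht).trans ?_
      have : (0:ℝ) ≤ |t - s| ^ (((q : ℝ) - k + 1) * α) := Real.rpow_nonneg (abs_nonneg _) _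
      nlinarith [le_max_left M0 (0:ℝ)]
    set C₀ : ℝ := ∑ m ∈ Finset.Icc 1 q, (1/(m.factorial:ℝ)) * Cx^m * M with hC₀def
    have hC₀ : 0 ≤ C₀ := Finset.sum_nonneg (fun m _ => by positivity)
    have hδmax := Xi_delta T α hα0 q x z Cx M hCx hM hx' hctrl'
    have hΞ0 : ∀ s, Xi q z x s s = 0 := fun s => Xi_self q z x s
    have hδord : ∀ s ∈ Icc (0:ℝ) T, ∀ u ∈ Icc (0:ℝ) T, ∀ t ∈ Icc (0:ℝ) T, s ≤ u → u ≤ t →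
        |Xi q z x s t - Xi q z x s u - Xi q z x u t| ≤ C₀ * (t - s)^θ := by
      intro s hs u hu t ht hsu hut
      refine (hδmax s hs u hu t ht).trans ?_
      refine mul_le_mul_of_nonneg_left ?_ hC₀
      refine Real.rpow_le_rpow (le_trans (abs_nonneg _) (le_max_left _ _)) ?_ hθ0.le
      rw [abs_of_nonneg (by linarith), abs_of_nonneg (by linarith)]
      exact max_le (by linarith) (by linarith)
    obtain ⟨I, hI0, K, hK0, hIb⟩ := sewing T θ C₀ hT hθ hC₀ (Xi q z x) hΞ0 hδord
    have hflip : ∀ s ∈ Icc (0:ℝ) T, ∀ t ∈ Icc (0:ℝ) T,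
        |Xi q z x s t + Xi q z x t s| ≤ C₀ * |t-s|^θ := by
      intro s hs t ht
      have h1 := hδmax s hs t ht s hs
      rw [hΞ0 s, abs_sub_comm s t, max_self] at h1
      have e : |Xi q z x s t + Xi q z x t s| = |0 - Xi q z x s t - Xi q z x t s| := by
        rw [← abs_neg]; congr 1; ring
      rw [e]
      exact h1
    have hMains : ∀ s ∈ Icc (0:ℝ) T, ∀ t ∈ Icc (0:ℝ) T,
        |I t - I s - Xi q z x s t| ≤ (K + C₀) * |t-s|^θ := by
      intro s hs t ht
      have hrpnn : (0:ℝ) ≤ |t-s|^θ := Real.rpow_nonneg (abs_nonneg _) _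
      rcases le_total s t with h | h
      · have h1 := hIb s hs t ht h
        rw [show |t - s| = t - s from abs_of_nonneg (by linarith)]
        have : (0:ℝ) ≤ (t-s)^θ := Real.rpow_nonneg (by linarith) _
        nlinarith
      · have h1 := hIb t ht s hs h
        have h2 := hflip s hs t ht
        have eab : |t - s| = s - t := by rw [abs_sub_comm]; exact abs_of_nonneg (by linarith)
        rw [eab] at h2 ⊢
        have e : I t - I s - Xi q z x s t
            = (-(I s - I t - Xi q z x t s)) + (-(Xi q z x s t + Xi q z x t s)) := by ring
        rw [e]
        refine (abs_add_le _ _).trans ?_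
        rw [abs_neg, abs_neg]
        linarith
    -- Hölder bound for Xi
    choose! Cz hCz using hz
    have hZb : ∀ k, 1 ≤ k → k ≤ q → ∀ s ∈ Icc (0:ℝ) T,
        |z k s| ≤ |z k 0| + max (Cz k) 0 * T^α := by
      intro k h1 h2 s hs
      have h3 := hCz k h1 h2 0 h0m s hs
      have habs : |s - 0|^α ≤ T^α :=
        Real.rpow_le_rpow (abs_nonneg _)
          (by rw [sub_zero, abs_of_nonneg hs.1]; exact hs.2) hα0.le
      have hTα : (0:ℝ) ≤ T^α := Real.rpow_nonneg hT.le _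
      have h4 : Cz k * |s-0|^α ≤ max (Cz k) 0 * T^α := by
        nlinarith [mul_nonneg (sub_nonneg.mpr (le_max_left (Cz k) 0))
            (Real.rpow_nonneg (abs_nonneg (s-0)) α),
          mul_nonneg (le_max_right (Cz k) 0) (sub_nonneg.mpr habs)]
      calc |z k s| = |z k 0 + (z k s - z k 0)| := by ring_nf
        _ ≤ |z k 0| + |z k s - z k 0| := abs_add_le _ _
        _ ≤ |z k 0| + max (Cz k) 0 * T^α := by linarith
    set CΞ : ℝ := ∑ k ∈ Finset.Icc 1 q,
        (1/(k.factorial:ℝ)) * (|z k 0| + max (Cz k) 0 * T^α) * Cx^k * (T^α)^(k-1) with hCΞdef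
    have hXiH : ∀ s ∈ Icc (0:ℝ) T, ∀ t ∈ Icc (0:ℝ) T,
        |Xi q z x s t| ≤ CΞ * |t-s|^α := by
      intro s hs t ht
      have htsα : (0:ℝ) ≤ |t-s|^α := Real.rpow_nonneg (abs_nonneg _) _
      have hTα : (0:ℝ) ≤ T^α := Real.rpow_nonneg hT.le _
      unfold Xi
      refine (Finset.abs_sum_le_sum_abs _ _).trans ?_
      rw [hCΞdef, Finset.sum_mul]
      refine Finset.sum_le_sum ?_
      intro k hk
      obtain ⟨hk1, hk2⟩ := Finset.mem_Icc.mp hk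
      rw [abs_mul, abs_mul, abs_pow]
      have hc : |(1:ℝ)/(k.factorial:ℝ)| = 1/(k.factorial:ℝ) := by
        rw [abs_of_nonneg]; positivity
      rw [hc]
      have hzb := hZb k hk1 hk2 s hs
      have hxb : |x t - x s|^k ≤ Cx^k * ((|t-s|^α)^(k-1) * |t-s|^α) := by
        calc |x t - x s|^k ≤ (Cx * |t-s|^α)^k :=
              pow_le_pow_left₀ (abs_nonneg _) (hx' s hs t ht) k
          _ = Cx^k * (|t-s|^α)^k := mul_pow _ _ _
          _ = Cx^k * ((|t-s|^α)^(k-1) * |t-s|^α) := by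
              congr 1
              conv_lhs => rw [show k = (k-1)+1 from by omega]
              rw [pow_succ]
      have hpowT : (|t-s|^α)^(k-1) ≤ (T^α)^(k-1) :=
        pow_le_pow_left₀ htsα
          (Real.rpow_le_rpow (abs_nonneg _) (hTabs s hs t ht) hα0.le) _
      have hznn : (0:ℝ) ≤ |z k 0| + max (Cz k) 0 * T^α := by positivity
      calc (1/(k.factorial:ℝ)) * |z k s| * |x t - x s|^k
          ≤ (1/(k.factorial:ℝ)) * (|z k 0| + max (Cz k) 0 * T^α)
              * (Cx^k * ((|t-s|^α)^(k-1) * |t-s|^α)) := by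
            have h5 : (1/(k.factorial:ℝ)) * |z k s| ≤
                (1/(k.factorial:ℝ)) * (|z k 0| + max (Cz k) 0 * T^α) :=
              mul_le_mul_of_nonneg_left hzb (by positivity)
            refine mul_le_mul h5 hxb (pow_nonneg (abs_nonneg _) _) ?_
            positivity
        _ ≤ (1/(k.factorial:ℝ)) * (|z k 0| + max (Cz k) 0 * T^α)
              * (Cx^k * ((T^α)^(k-1) * |t-s|^α)) := by
            refine mul_le_mul_of_nonneg_left ?_ (by positivity)
            refine mul_le_mul_of_nonneg_left ?_ (by positivity)
            exact mul_le_mul_of_nonneg_right hpowT htsα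
        _ = (1/(k.factorial:ℝ)) * (|z k 0| + max (Cz k) 0 * T^α) * Cx^k * (T^α)^(k-1)
              * |t-s|^α := by ring
    -- final Hölder for I
    have hIH : ∀ s ∈ Icc (0:ℝ) T, ∀ t ∈ Icc (0:ℝ) T,
        |I t - I s| ≤ (CΞ + (K + C₀)*T^(θ-α)) * |t-s|^α := by
      intro s hs t ht
      have h1 := hMains s hs t ht
      have h2 := hXiH s hs t ht
      have h3 : |t-s|^θ ≤ T^(θ-α) * |t-s|^α := by
        have hne : α + (θ - α) ≠ 0 := by
          have : α + (θ - α) = θ := by ring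
          rw [this]; linarith
        have e1 : |t-s|^θ = |t-s|^α * |t-s|^(θ-α) := by
          conv_lhs => rw [show θ = α + (θ-α) from by ring]
          exact Real.rpow_add' (abs_nonneg _) hne
        rw [e1]
        have h4 : |t-s|^(θ-α) ≤ T^(θ-α) :=
          Real.rpow_le_rpow (abs_nonneg _) (hTabs s hs t ht) (by linarith)
        nlinarith [Real.rpow_nonneg (abs_nonneg (t-s)) α,
          Real.rpow_nonneg hT.le (θ-α), Real.rpow_nonneg (abs_nonneg (t-s)) (θ-α)]
      have e : I t - I s = (I t - I s - Xi q z x s t) + Xi q z x s t := by ring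
      rw [e]
      refine (abs_add_le _ _).trans ?_
      calc |I t - I s - Xi q z x s t| + |Xi q z x s t|
          ≤ (K + C₀) * |t-s|^θ + CΞ * |t-s|^α := add_le_add h1 h2
        _ ≤ (K + C₀) * (T^(θ-α) * |t-s|^α) + CΞ * |t-s|^α :=
            add_le_add (mul_le_mul_of_nonneg_left h3 (by linarith)) le_rfl
        _ = (CΞ + (K + C₀)*T^(θ-α)) * |t-s|^α := by ring
    exact ⟨I, hI0, ⟨CΞ + (K + C₀)*T^(θ-α), hIH⟩, ⟨K + C₀, hMains⟩⟩
  · -- uniqueness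
    intro I₁ I₂ h10 h20 hB1 hB2 t ht
    obtain ⟨M₁, hM₁⟩ := hB1
    obtain ⟨M₂, hM₂⟩ := hB2
    obtain ⟨ht0, htT⟩ := ht
    have hD : ∀ u ∈ Icc (0:ℝ) T, ∀ v ∈ Icc (0:ℝ) T,
        |(I₁ v - I₂ v) - (I₁ u - I₂ u)| ≤ (M₁ + M₂) * |v - u|^θ := by
      intro u hu v hv
      have h1 := hM₁ u hu v hv
      have h2 := hM₂ u hu v hv
      have e : (I₁ v - I₂ v) - (I₁ u - I₂ u)
          = (I₁ v - I₁ u - ∑ k ∈ Finset.Icc 1 q, (1 / (k.factorial : ℝ)) *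
              z k u * (x v - x u) ^ k)
            + (-(I₂ v - I₂ u - ∑ k ∈ Finset.Icc 1 q, (1 / (k.factorial : ℝ)) *
              z k u * (x v - x u) ^ k)) := by ring
      rw [e]
      refine (abs_add_le _ _).trans ?_
      rw [abs_neg]
      linarith
    have key : ∀ n : ℕ, 1 ≤ n →
        |(I₁ t - I₂ t) - (I₁ 0 - I₂ 0)| ≤ (M₁ + M₂) * t^θ * ((n:ℝ))^(1-θ) := by
      intro n hn
      have hnR : (0:ℝ) < (n:ℝ) := by exact_mod_cast hn
      set g : ℕ → ℝ := fun i => I₁ ((i:ℝ)*t/n) - I₂ ((i:ℝ)*t/n) with hgdef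
      have htel := Finset.sum_range_sub g n
      have hgn : g n = I₁ t - I₂ t := by
        simp only [hgdef]
        have e : (n:ℝ)*t/(n:ℝ) = t := by field_simp
        rw [e]
      have hg0 : g 0 = I₁ 0 - I₂ 0 := by
        simp only [hgdef]
        norm_num
      have hmem : ∀ i : ℕ, i ≤ n → (i:ℝ)*t/n ∈ Icc (0:ℝ) T := by
        intro i hi
        have hiR : (i:ℝ) ≤ (n:ℝ) := by exact_mod_cast hi
        constructor
        · positivity
        · rw [div_le_iff₀ hnR]
          nlinarith
      have hstepb : ∀ i ∈ Finset.range n, |g (i+1) - g i| ≤ (M₁+M₂) * (t/n)^θ := by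
        intro i hi
        have hi' := Finset.mem_range.mp hi
        have h1 := hD ((i:ℝ)*t/n) (hmem i (by omega)) ((((i+1):ℕ):ℝ)*t/n) (hmem (i+1) (by omega))
        have e1 : (((i+1):ℕ):ℝ)*t/n - (i:ℝ)*t/n = t/n := by push_cast; ring
        have e2 : |(((i+1):ℕ):ℝ)*t/n - (i:ℝ)*t/n| = t/n := by
          rw [e1]; exact abs_of_nonneg (by positivity)
        rw [e2] at h1
        simp only [hgdef]
        exact h1
      calc |(I₁ t - I₂ t) - (I₁ 0 - I₂ 0)| = |∑ i ∈ Finset.range n, (g (i+1) - g i)| := by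
            rw [htel, hgn, hg0]
        _ ≤ ∑ i ∈ Finset.range n, |g (i+1) - g i| := Finset.abs_sum_le_sum_abs _ _
        _ ≤ ∑ _i ∈ Finset.range n, ((M₁+M₂)*(t/n)^θ) := Finset.sum_le_sum hstepb
        _ = n * ((M₁+M₂)*(t/n)^θ) := by
            rw [Finset.sum_const, Finset.card_range, nsmul_eq_mul]
        _ = (M₁+M₂) * t^θ * ((n:ℝ))^(1-θ) := by
            rw [Real.div_rpow ht0 hnR.le]
            have e3 : ((n:ℝ))^(1-θ) = (n:ℝ) / (n:ℝ)^θ := by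
              rw [Real.rpow_sub hnR, Real.rpow_one]
            rw [e3]
            have hne : ((n:ℝ)^θ) ≠ 0 := ne_of_gt (Real.rpow_pos_of_pos hnR _)
            field_simp
    have hlim : Tendsto (fun n:ℕ => (M₁+M₂) * t^θ * ((n:ℝ))^(1-θ)) atTop (𝓝 0) := by
      have h1 : Tendsto (fun y:ℝ => y^(-(θ-1))) atTop (𝓝 0) :=
        tendsto_rpow_neg_atTop (by linarith)
      have h2 : Tendsto (fun n:ℕ => ((n:ℝ))^(1-θ)) atTop (𝓝 0) := by
        refine (h1.comp tendsto_natCast_atTop_atTop).congr (fun n => ?_)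
        simp only [Function.comp]
        congr 1
        ring
      have h3 := h2.const_mul ((M₁+M₂) * t^θ)
      rw [mul_zero] at h3
      exact h3
    have hfin : |(I₁ t - I₂ t) - (I₁ 0 - I₂ 0)| ≤ 0 := by
      refine ge_of_tendsto hlim ?_
      filter_upwards [eventually_ge_atTop 1] with n hn
      exact key n hn
    rw [h10, h20] at hfin
    have h4 : |I₁ t - I₂ t| ≤ 0 := by simpa using hfin
    have h5 := abs_nonpos_iff.mp h4
    linarith
end

section
/- Define $\tilde{g}^M_{j,1} = -\frac{1}{j!}\mathcal{D}^{j-1}\sigma$ and $\tilde{g}^{CN}_3 = \frac{1}{4}\mathcal{D}^2\sigma - \frac{1}{3!}\mathcal{D}^2\sigma = \frac{1}{12}\mathcal{D}^2\sigma$, where $\mathcal{D}f = \sigma f'$. Prove the explicit formula: $\frac{1}{12}\mathcal{D}^2\sigma = \frac{1}{12}(\sigma''\sigma^2 + \sigma(\sigma')^2)$; and with $\hat{g}_4^{CN} = \frac{1}{8}\sigma(\sigma')^3 + \frac{3}{8}\sigma^2\sigma'\sigma'' + \frac{1}{12}\sigma^3\sigma'''$, prove that $\tilde{g}_4^{CN}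 := (\hat{g}_4^{CN} - \frac{1}{4!}\mathcal{D}^3\sigma) - \sigma'\tilde{g}_3^{CN} = \frac{1}{24}(3\sigma^2\sigma'\sigma'' + \sigma^3\sigma''')$, and that consequently $\tilde{g}_4^{CN} - \frac{1}{2}\mathcal{V}\tilde{g}_3^{CN} = 0$ where $\mathcal{V}f = \sigma f' - \sigma'f$. -/
/-- The vector-field derivative operator `𝒟 f = σ f'`. -/
noncomputable def Dop (σ f : ℝ → ℝ) : ℝ → ℝ := fun x => σ x * deriv f x

/-- `g̃₃^{CN} = (1/12) 𝒟²σ`. -/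
noncomputable def tg3CN (σ : ℝ → ℝ) : ℝ → ℝ := fun x => (1 / 12) * Dop σ (Dop σ σ) x

/-- `ĝ₄^{CN} = ⅛ σ(σ')³ + ⅜ σ²σ'σ'' + (1/12) σ³σ'''`. -/
noncomputable def hg4CN (σ : ℝ → ℝ) : ℝ → ℝ := fun x =>
  (1 / 8) * σ x * (deriv σ x) ^ 3 + (3 / 8) * (σ x) ^ 2 * deriv σ x * deriv (deriv σ) x +
    (1 / 12) * (σ x) ^ 3 * deriv (deriv (deriv σ)) x

/-- `g̃₄^{CN} = (ĝ₄^{CN} - (1/4!) 𝒟³σ) - σ' g̃₃^{CN}`. -/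
noncomputable def tg4CN (σ : ℝ → ℝ) : ℝ → ℝ := fun x =>
  (hg4CN σ x - (1 / 24) * Dop σ (Dop σ (Dop σ σ)) x) - deriv σ x * tg3CN σ x

/-- Explicit formulas for the Crank–Nicolson coefficients and the cancellation
`g̃₄^{CN} - ½ 𝒱 g̃₃^{CN} = 0`, where `𝒱 f = σ f' - σ' f`. -/
theorem stmt16 (σ : ℝ → ℝ) (hσ : ContDiff ℝ 4 σ) :
    (∀ x : ℝ, tg3CN σ x =
      (1 / 12) * (deriv (deriv σ) x * (σ x) ^ 2 + σ x * (deriv σ x) ^ 2)) ∧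
    (∀ x : ℝ, tg4CN σ x =
      (1 / 24) * (3 * (σ x) ^ 2 * deriv σ x * deriv (deriv σ) x +
        (σ x) ^ 3 * deriv (deriv (deriv σ)) x)) ∧
    (∀ x : ℝ, tg4CN σ x -
      (1 / 2) * (σ x * deriv (tg3CN σ) x - deriv σ x * tg3CN σ x) = 0) := by
  have hd0 : Differentiable ℝ σ := hσ.differentiable (by norm_num)
  have hc1 : ContDiff ℝ 3 (deriv σ) := by
    have h : ContDiff ℝ ((3:ℕ) + 1) σ := by exact_mod_cast hσ
    exact (contDiff_succ_iff_deriv.mp h).2.2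
  have hd1 : Differentiable ℝ (deriv σ) := hc1.differentiable (by norm_num)
  have hc2 : ContDiff ℝ 2 (deriv (deriv σ)) := by
    have h : ContDiff ℝ ((2:ℕ) + 1) (deriv σ) := by exact_mod_cast hc1
    exact (contDiff_succ_iff_deriv.mp h).2.2
  have hd2 : Differentiable ℝ (deriv (deriv σ)) := hc2.differentiable (by norm_num)
  -- derivative of Dop σ σ = σ σ'
  have e1 : deriv (Dop σ σ) = fun x => deriv σ x * deriv σ x + σ x * deriv (deriv σ) x := by
    funext x
    exact deriv_mul (hd0 x) (hd1 x)
  set g : ℝ → ℝ := fun x => deriv σ x * deriv σ x + σ x * deriv (deriv σ) x with hgdef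
  have hg : Differentiable ℝ g := (hd1.mul hd1).add (hd0.mul hd2)
  have eg : deriv g = fun x =>
      (deriv (deriv σ) x * deriv σ x + deriv σ x * deriv (deriv σ) x) +
        (deriv σ x * deriv (deriv σ) x + σ x * deriv (deriv (deriv σ)) x) := by
    funext x
    rw [hgdef, deriv_fun_add (f := fun y => deriv σ y * deriv σ y) (g := fun y => σ y * deriv (deriv σ) y)
        ((hd1.mul hd1) x) ((hd0.mul hd2) x),
      deriv_fun_mul (hd1 x) (hd1 x), deriv_fun_mul (hd0 x) (hd2 x)]
  have eD2 : Dop σ (Dop σ σ) = fun x => σ x * g x := by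
    funext x
    show σ x * deriv (Dop σ σ) x = _
    rw [e1]
  have eD3 : ∀ x, Dop σ (Dop σ (Dop σ σ)) x =
      σ x * (deriv σ x * g x + σ x * deriv g x) := by
    intro x
    show σ x * deriv (Dop σ (Dop σ σ)) x = _
    rw [eD2, deriv_fun_mul (hd0 x) (hg x)]
  have et3 : deriv (tg3CN σ) = fun x =>
      (1 / 12) * (deriv σ x * g x + σ x * deriv g x) := by
    funext x
    have : tg3CN σ = fun x => (1 / 12 : ℝ) * (σ x * g x) := by
      funext y; show (1/12 : ℝ) * Dop σ (Dop σ σ) y = _; rw [eD2]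
    rw [this, deriv_const_mul (d := fun y => σ y * g y) _ ((hd0.mul hg) x), deriv_fun_mul (hd0 x) (hg x)]
  have h3 : ∀ x : ℝ, tg3CN σ x =
      (1 / 12) * (deriv (deriv σ) x * (σ x) ^ 2 + σ x * (deriv σ x) ^ 2) := by
    intro x
    show (1/12 : ℝ) * Dop σ (Dop σ σ) x = _
    rw [eD2]
    ring
  have h4 : ∀ x : ℝ, tg4CN σ x =
      (1 / 24) * (3 * (σ x) ^ 2 * deriv σ x * deriv (deriv σ) x +
        (σ x) ^ 3 * deriv (deriv (deriv σ)) x) := by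
    intro x
    show (hg4CN σ x - (1/24) * Dop σ (Dop σ (Dop σ σ)) x) - deriv σ x * tg3CN σ x = _
    rw [eD3, h3, hg4CN]
    have := congrFun eg x
    rw [this]
    ring
  refine ⟨h3, h4, fun x => ?_⟩
  rw [h4, h3, congrFun et3 x, congrFun eg x]
  ring
end

section
/- Let $0 < H < 1/2$ and let $B$ be a fractional Brownian motion with Hurst parameter $H$. For $s<t$ and $s'<t'$ with $s \ne s'$ and $|t'-s'| \le \min(|t-s'|, |s-s'|)$, we have $E[(B_t - B_s)B^{10*}_{s',t'}] = O\big(\frac{|t'-s'|^3}{|t-s'|^{2-2H}} + \frac{|t'-s'|^3}{|s-s'|^{2-2H}}\big)$, where $B^{10*}_{s',t'} = \int_{s'}^{t'}(B_u - B_{s'})du - \frac{1}{2}(B_{t'}-B_{s'})(t'-s')$. -/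
open MeasureTheory intervalIntegral

/-- The corrected first iterated integral
`B^{10*}_{s,t} = ∫_s^t (B_u - B_s) du - ½ (B_t - B_s)(t-s)`. -/
noncomputable def B10star {Ω : Type*} (B : ℝ → Ω → ℝ) (s t : ℝ) (ω : Ω) : ℝ :=
  (∫ u in s..t, (B u ω - B s ω)) - (B t ω - B s ω) * (t - s) / 2

open Set Filter

lemma hasDerivAt_sub_rpow {a u : ℝ} (h : u < a) (q : ℝ) :
    HasDerivAt (fun v => (a - v) ^ q) (-(q * (a - u) ^ (q - 1))) u := by
  have h1 : HasDerivAt (fun v : ℝ => a - v) (-1) u := by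
    exact (hasDerivAt_id' u).const_sub a
  have h2 := (Real.hasDerivAt_rpow_const (x := a - u) (p := q)
    (Or.inl (sub_ne_zero.2 (by linarith)))).comp u h1
  exact h2.congr_deriv (by ring)

lemma hasDerivAt_rpow_sub {a u : ℝ} (h : a < u) (q : ℝ) :
    HasDerivAt (fun v => (v - a) ^ q) (q * (u - a) ^ (q - 1)) u := by
  have h1 : HasDerivAt (fun v : ℝ => v - a) 1 u := by
    exact (hasDerivAt_id' u).sub_const a
  have h2 := (Real.hasDerivAt_rpow_const (x := u - a) (p := q)
    (Or.inl (sub_ne_zero.2 (by linarith)))).comp u h1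
  exact h2.congr_deriv (by ring)

lemma abs_eventually_lt {a u : ℝ} (h : u < a) :
    (fun v : ℝ => |a - v| ^ (1:ℝ)) =ᶠ[nhds u] fun v => (a - v) ^ (1:ℝ) := by
  filter_upwards [Iio_mem_nhds h] with v hv
  rw [abs_of_pos (by simpa using hv)]

lemma trapezoid {g g' g'' : ℝ → ℝ} {s t M : ℝ} (hst : s < t)
    (h1 : ∀ u ∈ Set.Icc s t, HasDerivAt g (g' u) u)
    (h2 : ∀ u ∈ Set.Icc s t, HasDerivAt g' (g'' u) u)
    (hc2 : ContinuousOn g'' (Set.Icc s t))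
    (hMb : ∀ u ∈ Set.Icc s t, |g'' u| ≤ M) :
    |(∫ u in s..t, g u) - (t - s) / 2 * (g s + g t)| ≤ M * (t - s) ^ 3 / 2 := by
  have huIcc : Set.uIcc s t = Set.Icc s t := Set.uIcc_of_le hst.le
  set w : ℝ → ℝ := fun u => (u - s) * (t - u) / 2 with hw
  set w' : ℝ → ℝ := fun u => (t + s) / 2 - u with hw'
  have hwd : ∀ u ∈ Set.uIcc s t, HasDerivAt w (w' u) u := by
    intro u _
    have : HasDerivAt (fun u : ℝ => (u - s) * (t - u) / 2)
        (((1) * (t - u) + (u - s) * (-1)) / 2) u := by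
      simpa using (((hasDerivAt_id u).sub_const s).mul
        ((hasDerivAt_const u t).sub (hasDerivAt_id u))).div_const 2
    convert this using 1
    simp [hw']; ring
  have hw'd : ∀ u ∈ Set.uIcc s t, HasDerivAt w' (-1) u := by
    intro u _
    exact (hasDerivAt_id' u).const_sub ((t+s)/2)
  have hg'cont : ContinuousOn g' (Set.Icc s t) := fun u hu =>
    (h2 u hu).continuousAt.continuousWithinAt
  have hgcont : ContinuousOn g (Set.Icc s t) := fun u hu =>
    (h1 u hu).continuousAt.continuousWithinAt
  have hg'int : IntervalIntegrable g' volume s t :=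
    (hg'cont.mono huIcc.subset).intervalIntegrable
  have hg''int : IntervalIntegrable g'' volume s t :=
    (hc2.mono huIcc.subset).intervalIntegrable
  have ibp1 : ∫ u in s..t, w u * g'' u =
      w t * g' t - w s * g' s - ∫ u in s..t, w' u * g' u := by
    apply integral_mul_deriv_eq_deriv_mul hwd (fun u hu => h2 u (huIcc ▸ hu))
      ((continuousOn_const.sub continuousOn_id).intervalIntegrable) hg''int
  have ibp2 : ∫ u in s..t, w' u * g' u =
      w' t * g t - w' s * g s - ∫ u in s..t, (-1) * g u := by
    apply integral_mul_deriv_eq_deriv_mul hw'd (fun u hu => h1 u (huIcc ▸ hu))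
      (continuousOn_const.intervalIntegrable) hg'int
  have hws : w s = 0 := by simp [hw]
  have hwt : w t = 0 := by simp [hw]
  have hneg : ∫ u in s..t, (-1) * g u = -∫ u in s..t, g u := by
    simp [intervalIntegral.integral_neg]
  have key : ∫ u in s..t, w u * g'' u =
      -((∫ u in s..t, g u) - (t - s) / 2 * (g s + g t)) := by
    rw [ibp1, ibp2, hws, hwt, hneg]
    simp only [hw']
    ring
  have hbound : |∫ u in s..t, w u * g'' u| ≤ M * (t - s) ^ 2 / 2 * |t - s| := by
    have := intervalIntegral.norm_integral_le_of_norm_le_const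
      (f := fun u => w u * g'' u) (C := M * (t - s) ^ 2 / 2) (a := s) (b := t) ?_
    · simpa using this
    · intro x hx
      rw [Set.uIoc_of_le hst.le] at hx
      have hx1 : s < x := hx.1
      have hx2 : x ≤ t := hx.2
      have hM0 : 0 ≤ M := le_trans (abs_nonneg _) (hMb s ⟨le_refl s, hst.le⟩)
      have h1' : |w x| ≤ (t - s) ^ 2 / 2 := by
        rw [abs_div, abs_mul]
        have : |x - s| * |t - x| ≤ (t - s) * (t - s) := by
          apply mul_le_mul
          · rw [abs_of_pos (by linarith)]; linarith
          · rw [abs_of_nonneg (by linarith)]; linarith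
          · exact abs_nonneg _
          · linarith
        rw [abs_of_pos (by norm_num : (0:ℝ) < 2)]
        nlinarith
      have h2' : |g'' x| ≤ M := hMb x ⟨hx1.le, hx2⟩
      calc ‖w x * g'' x‖ = |w x| * |g'' x| := by rw [norm_mul]; rfl
        _ ≤ (t - s) ^ 2 / 2 * M := by
            apply mul_le_mul h1' h2' (abs_nonneg _) (by positivity)
        _ = M * (t - s) ^ 2 / 2 := by ring
  rw [key] at hbound
  rw [abs_neg] at hbound
  calc |(∫ u in s..t, g u) - (t - s) / 2 * (g s + g t)|
      ≤ M * (t - s) ^ 2 / 2 * |t - s| := hbound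
    _ = M * (t - s) ^ 3 / 2 := by rw [abs_of_pos (by linarith)]; ring

lemma keylem {p a s t : ℝ} (hp0 : 0 < p) (hp1 : p < 1) (hst : s < t)
    (hL : t - s ≤ |a - s|) :
    |(∫ u in s..t, |a - u| ^ p) - (t - s) / 2 * (|a - s| ^ p + |a - t| ^ p)| ≤
      24 * (t - s) ^ 3 * |a - s| ^ (p - 2) := by
  set L := t - s with hLdef
  have hL0 : 0 < L := by simp [hLdef]; linarith
  clear_value L
  have has0 : 0 < |a - s| := lt_of_lt_of_le hL0 hL
  rcases lt_or_ge |a - s| (2 * L) with hB | hA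
  · -- Case B : |a - s| < 2L, crude bound
    have h3L : ∀ u ∈ Set.Icc s t, |a - u| ≤ 3 * L := by
      intro u hu
      have : |a - u| ≤ |a - s| + |s - u| := by
        calc |a - u| = |(a - s) + (s - u)| := by ring_nf
          _ ≤ |a - s| + |s - u| := abs_add_le _ _
      have h2 : |s - u| ≤ L := by
        rw [abs_sub_comm, abs_of_nonneg (by linarith [hu.1])]
        linarith [hu.2]
      linarith
    have hint : |∫ u in s..t, |a - u| ^ p| ≤ (3 * L) ^ p * L := by
      have := intervalIntegral.norm_integral_le_of_norm_le_const
        (f := fun u => |a - u| ^ p) (C := (3 * L) ^ p) (a := s) (b := t) ?_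
      · rw [Real.norm_eq_abs] at this
        calc |∫ u in s..t, |a - u| ^ p| ≤ (3 * L) ^ p * |t - s| := this
          _ = (3 * L) ^ p * L := by
              rw [abs_of_pos (show (0:ℝ) < t - s by linarith), ← hLdef]
      · intro x hx
        rw [Set.uIoc_of_le hst.le] at hx
        rw [Real.norm_of_nonneg (Real.rpow_nonneg (abs_nonneg _) _)]
        exact Real.rpow_le_rpow (abs_nonneg _)
          (h3L x ⟨hx.1.le, hx.2⟩) hp0.le
    have hgs : |a - s| ^ p ≤ (3 * L) ^ p :=
      Real.rpow_le_rpow (abs_nonneg _) (h3L s ⟨le_refl _, hst.le⟩) hp0.le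
    have hgt : |a - t| ^ p ≤ (3 * L) ^ p :=
      Real.rpow_le_rpow (abs_nonneg _) (h3L t ⟨hst.le, le_refl _⟩) hp0.le
    have h3Lp : (3 * L) ^ p = 3 ^ p * L ^ p :=
      Real.mul_rpow (by norm_num) hL0.le
    have h3p : (3 : ℝ) ^ p ≤ 3 := by
      calc (3:ℝ) ^ p ≤ (3:ℝ) ^ (1:ℝ) :=
        Real.rpow_le_rpow_of_exponent_le (by norm_num) hp1.le
        _ = 3 := Real.rpow_one 3
    have hLp0 : 0 ≤ L ^ p := Real.rpow_nonneg hL0.le _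
    have lhs_le : |(∫ u in s..t, |a - u| ^ p) - L / 2 * (|a - s| ^ p + |a - t| ^ p)|
        ≤ 6 * (L ^ p * L) := by
      have habs : |(∫ u in s..t, |a - u| ^ p) - L / 2 * (|a - s| ^ p + |a - t| ^ p)|
          ≤ |∫ u in s..t, |a - u| ^ p| + L / 2 * (|a - s| ^ p + |a - t| ^ p) := by
        have h1 : 0 ≤ L / 2 * (|a - s| ^ p + |a - t| ^ p) := by
          have := Real.rpow_nonneg (abs_nonneg (a - s)) p
          have := Real.rpow_nonneg (abs_nonneg (a - t)) p
          positivity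
        calc _ ≤ |∫ u in s..t, |a - u| ^ p| + |L / 2 * (|a - s| ^ p + |a - t| ^ p)| :=
              abs_sub _ _
          _ = _ := by rw [abs_of_nonneg h1]
      have : L / 2 * (|a - s| ^ p + |a - t| ^ p) ≤ L / 2 * (2 * (3 * L) ^ p) := by
        apply mul_le_mul_of_nonneg_left (by linarith) (by linarith)
      calc |(∫ u in s..t, |a - u| ^ p) - L / 2 * (|a - s| ^ p + |a - t| ^ p)|
          ≤ (3 * L) ^ p * L + L / 2 * (2 * (3 * L) ^ p) := by linarith
        _ = 2 * L * (3 ^ p * L ^ p) := by rw [h3Lp]; ring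
        _ ≤ 2 * L * (3 * L ^ p) := by
            apply mul_le_mul_of_nonneg_left (by nlinarith) (by linarith)
        _ = 6 * (L ^ p * L) := by ring
    have rhs_ge : 6 * (L ^ p * L) ≤ 24 * L ^ 3 * |a - s| ^ (p - 2) := by
      have h1 : (2 * L) ^ (p - 2) ≤ |a - s| ^ (p - 2) :=
        Real.rpow_le_rpow_of_nonpos has0 hB.le (by linarith)
      have h2 : (2 * L) ^ (p - 2) = 2 ^ (p - 2) * L ^ (p - 2) :=
        Real.mul_rpow (by norm_num) hL0.le
      have h3 : (2:ℝ) ^ (-2 : ℝ) ≤ 2 ^ (p - 2) :=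
        Real.rpow_le_rpow_of_exponent_le (by norm_num) (by linarith)
      have h4 : (2:ℝ) ^ (-2:ℝ) = 1/4 := by
        rw [show (-2:ℝ) = ((-2 : ℤ) : ℝ) by norm_num, Real.rpow_intCast]
        norm_num
      have h5 : 0 ≤ L ^ (p - 2) := Real.rpow_nonneg hL0.le _
      have h6 : L ^ 3 * L ^ (p - 2) = L ^ p * L := by
        rw [show (L:ℝ) ^ (3:ℕ) = L ^ (3:ℝ) by rw [← Real.rpow_natCast]; norm_num]
        rw [← Real.rpow_add hL0, show (3:ℝ) + (p - 2) = p + 1 by ring,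
          Real.rpow_add hL0, Real.rpow_one]
      calc 6 * (L ^ p * L) = 24 * (1/4) * (L ^ p * L) := by ring
        _ = 24 * L ^ 3 * ((2:ℝ) ^ (-2:ℝ) * L ^ (p-2)) := by rw [h4, ← h6]; ring
        _ ≤ 24 * L ^ 3 * (2 ^ (p - 2) * L ^ (p-2)) := by
            apply mul_le_mul_of_nonneg_left
              (mul_le_mul_of_nonneg_right h3 h5) (by positivity)
        _ = 24 * L ^ 3 * (2 * L) ^ (p - 2) := by rw [h2]
        _ ≤ 24 * L ^ 3 * |a - s| ^ (p - 2) := by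
            apply mul_le_mul_of_nonneg_left h1 (by positivity)
    linarith
  · -- Case A : 2L ≤ |a - s|, trapezoid estimate
    have hL24 : (0:ℝ) ≤ L ^ 3 := by positivity
    have hIcc : Set.uIcc s t = Set.Icc s t := Set.uIcc_of_le hst.le
    rcases lt_or_gt_of_ne (show a ≠ s by intro h; rw [h] at has0; simp at has0) with hlt | hgt
    · -- a < s : on Icc s t, u - a ≥ s - a = |a - s| > 0
      have habs : |a - s| = s - a := by rw [abs_of_neg (by linarith)]; ring
      have hpos : ∀ u ∈ Set.Icc s t, 0 < u - a := fun u hu => by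
        have := hu.1; linarith
      have hEq : Set.EqOn (fun u => |a - u| ^ p) (fun u => (u - a) ^ p) (Set.uIcc s t) := by
        intro u hu
        rw [hIcc] at hu
        simp only
        rw [abs_of_neg (by have := hpos u hu; linarith), neg_sub]
      have hints : (∫ u in s..t, |a - u| ^ p) = ∫ u in s..t, (u - a) ^ p :=
        intervalIntegral.integral_congr hEq
      have hvs : |a - s| ^ p = (s - a) ^ p := by rw [habs]
      have hvt : |a - t| ^ p = (t - a) ^ p := by
        rw [abs_of_neg (by linarith), neg_sub]
      set M : ℝ := |a - s| ^ (p - 2) with hM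
      have hM0 : 0 < M := Real.rpow_pos_of_pos has0 _
      have htrap := trapezoid (g := fun u => (u - a) ^ p)
        (g' := fun u => p * (u - a) ^ (p - 1))
        (g'' := fun u => p * ((p - 1) * (u - a) ^ (p - 2))) (M := M) hst
        (fun u hu => hasDerivAt_rpow_sub (by linarith [hu.1]) p)
        (fun u hu => by
          have h1 := (hasDerivAt_rpow_sub (show a < u by linarith [hu.1]) (p - 1)).const_mul p
          rw [show p - 1 - 1 = p - 2 by ring] at h1
          exact h1)
        (by
          apply ContinuousOn.mul continuousOn_const
          apply ContinuousOn.mul continuousOn_const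
          apply ContinuousOn.rpow_const
          · exact (continuousOn_id.sub continuousOn_const)
          · intro u hu
            exact Or.inl (ne_of_gt (hpos u hu)))
        (fun u hu => by
          have h1 : |a - s| ≤ u - a := by rw [habs]; linarith [hu.1]
          have h2 : (u - a) ^ (p - 2) ≤ M := by
            rw [hM]
            exact Real.rpow_le_rpow_of_nonpos has0 h1 (by linarith)
          have h3 : 0 ≤ (u - a) ^ (p - 2) := Real.rpow_nonneg (by linarith [hpos u hu]) _
          calc |p * ((p - 1) * (u - a) ^ (p - 2))|
              = (p * (1 - p)) * (u - a) ^ (p - 2) := by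
                rw [abs_mul, abs_mul, abs_of_pos hp0, abs_of_neg (by linarith : p - 1 < 0),
                  abs_of_nonneg h3]; ring
            _ ≤ 1 * M := by
                apply mul_le_mul (by nlinarith) h2 h3 (by norm_num)
            _ = M := one_mul M)
      rw [hints, hvs, hvt]
      calc |(∫ u in s..t, (u - a) ^ p) - L / 2 * ((s - a) ^ p + (t - a) ^ p)|
          ≤ M * (t - s) ^ 3 / 2 := by rw [hLdef]; exact htrap
        _ ≤ 24 * L ^ 3 * M := by rw [← hLdef]; nlinarith
    · -- a > s : on Icc s t, a - u ≥ a - t = |a - s| - L ≥ |a - s| / 2 > 0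
      have habs : |a - s| = a - s := abs_of_pos (by linarith)
      have hat : |a - s| / 2 ≤ a - t := by
        have : L ≤ |a - s| / 2 := by linarith
        rw [habs] at this ⊢; linarith [hLdef]
      have haspos : 0 < |a - s| / 2 := by linarith
      have hpos : ∀ u ∈ Set.Icc s t, |a - s| / 2 ≤ a - u := fun u hu => by
        have := hu.2; linarith
      have hpos' : ∀ u ∈ Set.Icc s t, 0 < a - u := fun u hu =>
        lt_of_lt_of_le haspos (hpos u hu)
      have hEq : Set.EqOn (fun u => |a - u| ^ p) (fun u => (a - u) ^ p) (Set.uIcc s t) := by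
        intro u hu
        rw [hIcc] at hu
        simp only
        rw [abs_of_pos (hpos' u hu)]
      have hints : (∫ u in s..t, |a - u| ^ p) = ∫ u in s..t, (a - u) ^ p :=
        intervalIntegral.integral_congr hEq
      have hvs : |a - s| ^ p = (a - s) ^ p := by rw [habs]
      have hvt : |a - t| ^ p = (a - t) ^ p := by
        rw [abs_of_pos (hpos' t ⟨hst.le, le_refl _⟩)]
      set M : ℝ := (|a - s| / 2) ^ (p - 2) with hM
      have hM0 : 0 < M := Real.rpow_pos_of_pos haspos _
      have htrap := trapezoid (g := fun u => (a - u) ^ p)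
        (g' := fun u => -(p * (a - u) ^ (p - 1)))
        (g'' := fun u => p * ((p - 1) * (a - u) ^ (p - 2))) (M := M) hst
        (fun u hu => hasDerivAt_sub_rpow (by linarith [hpos' u hu]) p)
        (fun u hu => by
          have h1 := ((hasDerivAt_sub_rpow (show u < a by linarith [hpos' u hu]) (p - 1)).const_mul p).neg
          rw [show p - 1 - 1 = p - 2 by ring] at h1
          exact h1.congr_deriv (by ring))
        (by
          apply ContinuousOn.mul continuousOn_const
          apply ContinuousOn.mul continuousOn_const
          apply ContinuousOn.rpow_const
          · exact (continuousOn_const.sub continuousOn_id)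
          · intro u hu
            exact Or.inl (ne_of_gt (hpos' u hu)))
        (fun u hu => by
          have h2 : (a - u) ^ (p - 2) ≤ M := by
            rw [hM]
            exact Real.rpow_le_rpow_of_nonpos haspos (hpos u hu) (by linarith)
          have h3 : 0 ≤ (a - u) ^ (p - 2) := Real.rpow_nonneg (by linarith [hpos' u hu]) _
          calc |p * ((p - 1) * (a - u) ^ (p - 2))|
              = (p * (1 - p)) * (a - u) ^ (p - 2) := by
                rw [abs_mul, abs_mul, abs_of_pos hp0, abs_of_neg (by linarith : p - 1 < 0),
                  abs_of_nonneg h3]; ring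
            _ ≤ 1 * M := by
                apply mul_le_mul (by nlinarith) h2 h3 (by norm_num)
            _ = M := one_mul M)
      have hMle : M ≤ 4 * |a - s| ^ (p - 2) := by
        rw [hM, Real.div_rpow (abs_nonneg _) (by norm_num)]
        rw [div_le_iff₀ (Real.rpow_pos_of_pos (by norm_num) _)] at *
        · have h24 : (1:ℝ) ≤ 2 ^ (p - 2) * 4 := by
            have : (2:ℝ) ^ (-2:ℝ) ≤ 2 ^ (p - 2) :=
              Real.rpow_le_rpow_of_exponent_le (by norm_num) (by linarith)
            have h4 : (2:ℝ) ^ (-2:ℝ) = 1/4 := by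
              rw [show (-2:ℝ) = ((-2 : ℤ) : ℝ) by norm_num, Real.rpow_intCast]
              norm_num
            rw [h4] at this
            linarith
          have hx : 0 ≤ |a - s| ^ (p - 2) := Real.rpow_nonneg (abs_nonneg _) _
          nlinarith
      rw [hints, hvs, hvt]
      calc |(∫ u in s..t, (a - u) ^ p) - L / 2 * ((a - s) ^ p + (a - t) ^ p)|
          ≤ M * (t - s) ^ 3 / 2 := by rw [hLdef]; exact htrap
        _ ≤ 24 * L ^ 3 * |a - s| ^ (p - 2) := by
            rw [← hLdef] at *
            have hx : 0 ≤ |a - s| ^ (p - 2) := Real.rpow_nonneg (abs_nonneg _) _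
            nlinarith

lemma det_main {p s t s' t' : ℝ} (hp0 : 0 < p) (hp1 : p < 1) (h' : s' < t')
    (h1 : t' - s' ≤ |t - s'|) (h2 : t' - s' ≤ |s - s'|) :
    |(∫ u in s'..t', (|s - u| ^ p - |t - u| ^ p + |t - s'| ^ p - |s - s'| ^ p) / 2) -
      (t' - s') / 2 * ((|s - t'| ^ p - |t - t'| ^ p + |t - s'| ^ p - |s - s'| ^ p) / 2)| ≤
      12 * (t' - s') ^ 3 * (|t - s'| ^ (p - 2) + |s - s'| ^ (p - 2)) := by
  have hcont : ∀ a : ℝ, Continuous fun u : ℝ => |a - u| ^ p := fun a =>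
    ((continuous_const.sub continuous_id).abs).rpow_const (fun x => Or.inr hp0.le)
  have hintg : ∀ a : ℝ, IntervalIntegrable (fun u => |a - u| ^ p) volume s' t' :=
    fun a => (hcont a).intervalIntegrable s' t'
  have hsplit : (∫ u in s'..t',
      (|s - u| ^ p - |t - u| ^ p + |t - s'| ^ p - |s - s'| ^ p) / 2) =
      ((∫ u in s'..t', |s - u| ^ p) - (∫ u in s'..t', |t - u| ^ p)
        + (t' - s') * (|t - s'| ^ p - |s - s'| ^ p)) / 2 := by
    rw [intervalIntegral.integral_div]
    congr 1
    rw [intervalIntegral.integral_sub (((hintg s).sub (hintg t)).add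
        (intervalIntegrable_const)) intervalIntegrable_const,
      intervalIntegral.integral_add ((hintg s).sub (hintg t)) intervalIntegrable_const,
      intervalIntegral.integral_sub (hintg s) (hintg t),
      intervalIntegral.integral_const, intervalIntegral.integral_const]
    simp only [smul_eq_mul]
    ring
  have kS := keylem (a := s) hp0 hp1 h' h2
  have kT := keylem (a := t) hp0 hp1 h' h1
  set TS := (∫ u in s'..t', |s - u| ^ p) -
    (t' - s') / 2 * (|s - s'| ^ p + |s - t'| ^ p) with hTS
  set TT := (∫ u in s'..t', |t - u| ^ p) -
    (t' - s') / 2 * (|t - s'| ^ p + |t - t'| ^ p) with hTT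
  clear_value TS TT
  have heq : (∫ u in s'..t',
      (|s - u| ^ p - |t - u| ^ p + |t - s'| ^ p - |s - s'| ^ p) / 2) -
      (t' - s') / 2 * ((|s - t'| ^ p - |t - t'| ^ p + |t - s'| ^ p - |s - s'| ^ p) / 2)
      = (TS - TT) / 2 := by
    rw [hsplit, hTS, hTT]
    ring
  rw [heq]
  have hb : |(TS - TT) / 2| ≤ (|TS| + |TT|) / 2 := by
    rw [abs_div, abs_of_pos (by norm_num : (0:ℝ) < 2)]
    apply div_le_div_of_nonneg_right ?_ (by norm_num)
    · exact abs_sub _ _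
  calc |(TS - TT) / 2| ≤ (|TS| + |TT|) / 2 := hb
    _ ≤ (24 * (t' - s') ^ 3 * |s - s'| ^ (p - 2)
        + 24 * (t' - s') ^ 3 * |t - s'| ^ (p - 2)) / 2 := by linarith
    _ = 12 * (t' - s') ^ 3 * (|t - s'| ^ (p - 2) + |s - s'| ^ (p - 2)) := by ring

lemma joint_aesm {Ω : Type} [MeasurableSpace Ω] (μ : Measure Ω) [SFinite μ] (ν : Measure ℝ) [SFinite ν]
    (B : ℝ → Ω → ℝ) (hc : ∀ ω, Continuous fun u => B u ω)
    (hm : ∀ u, AEStronglyMeasurable (B u) μ) :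
    AEStronglyMeasurable (fun p : ℝ × Ω => B p.1 p.2) (ν.prod μ) := by
  obtain ⟨t_sf, ht_sf⟩ : ∃ t : ℕ → SimpleFunc ℝ ℝ, ∀ j x,
      Tendsto (fun n => B (t n j) x) atTop (nhds (B j x)) := by
    refine ⟨stronglyMeasurable_id.approx, fun j x => ?_⟩
    exact ((hc x).tendsto j).comp (stronglyMeasurable_id.tendsto_approx j)
  apply aestronglyMeasurable_of_tendsto_ae atTop
    (f := fun n (p : ℝ × Ω) => B (t_sf n p.1) p.2)
  · intro n
    set F : ℝ → Ω → ℝ := fun q => (hm q).mk (B q) with hF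
    have hFm : ∀ q, StronglyMeasurable (F q) := fun q => (hm q).stronglyMeasurable_mk
    have hmeas : StronglyMeasurable fun p : ℝ × Ω => F (t_sf n p.1) p.2 := by
      have h1 : Measurable fun p : (t_sf n).range × Ω => F (p.1 : ℝ) p.2 := by
        have heq : (fun p : (t_sf n).range × Ω => F (p.1 : ℝ) p.2) =
            (fun p : Ω × (t_sf n).range => F (p.2 : ℝ) p.1) ∘ Prod.swap := rfl
        rw [heq, measurable_swap_iff]
        exact measurable_from_prod_countable_left fun j => (hFm j).measurable
      have heq2 : (fun p : ℝ × Ω => F (t_sf n p.1) p.2) =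
          (fun p : (t_sf n).range × Ω => F (p.1 : ℝ) p.2) ∘ fun p : ℝ × Ω =>
            (⟨t_sf n p.1, SimpleFunc.mem_range_self _ _⟩, p.2) := rfl
      rw [heq2]
      exact (h1.comp (((t_sf n).measurable.comp measurable_fst).subtype_mk.prodMk
        measurable_snd)).stronglyMeasurable
    refine hmeas.aestronglyMeasurable.congr ?_
    have hae : ∀ᵐ (p : ℝ × Ω) ∂ν.prod μ, ∀ q ∈ (t_sf n).range, F q p.2 = B q p.2 := by
      rw [Filter.eventually_all_finset]
      intro q _
      have h1 : F q =ᵐ[μ] B q := (hm q).ae_eq_mk.symm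
      exact MeasureTheory.Measure.QuasiMeasurePreserving.ae_eq_comp
        MeasureTheory.Measure.quasiMeasurePreserving_snd h1
    filter_upwards [hae] with p hp
    exact hp (t_sf n p.1) (SimpleFunc.mem_range_self _ _)
  · exact Eventually.of_forall fun p => ht_sf p.1 p.2

lemma L2mul {Ω : Type} [MeasurableSpace Ω] {μ : Measure Ω} {f g : Ω → ℝ}
    (hf : MemLp f 2 μ) (hg : MemLp g 2 μ) : Integrable (fun ω => f ω * g ω) μ := by
  have h1 : Integrable (fun ω => (f ω ^ 2 + g ω ^ 2) / 2) μ :=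
    (hf.integrable_sq.add hg.integrable_sq).div_const 2
  apply Integrable.mono' h1 (hf.aestronglyMeasurable.mul hg.aestronglyMeasurable)
  apply Eventually.of_forall
  intro ω
  simp only [Pi.mul_apply]
  rw [Real.norm_eq_abs, abs_mul]
  nlinarith [sq_nonneg (|f ω| - |g ω|), sq_abs (f ω), sq_abs (g ω),
    abs_nonneg (f ω), abs_nonneg (g ω)]

/-- Covariance estimate for fBm with `0 < H < 1/2`: for `s < t`, `s' < t'` with `s ≠ s'`
and `|t'-s'| ≤ min(|t-s'|, |s-s'|)`,
`|E[(B_t - B_s) B^{10*}_{s',t'}]| ≤ C (|t'-s'|³/|t-s'|^{2-2H} + |t'-s'|³/|s-s'|^{2-2H})`,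
with `C` depending only on `H`. -/
theorem stmt19 (H : ℝ) (hH0 : 0 < H) (hH1 : H < 1 / 2) :
    ∃ C : ℝ, 0 < C ∧
      ∀ (Ω : Type) [MeasurableSpace Ω] (μ : Measure Ω) [IsProbabilityMeasure μ]
        (B : ℝ → Ω → ℝ),
        (∀ ω : Ω, Continuous fun u => B u ω) →
        (∀ u : ℝ, AEStronglyMeasurable (B u) μ) →
        (∀ u : ℝ, MemLp (B u) 2 μ) →
        (∀ u : ℝ, ∫ ω, B u ω ∂μ = 0) →
        (∀ u v : ℝ, ∫ ω, B u ω * B v ω ∂μ =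
          (|u| ^ (2 * H) + |v| ^ (2 * H) - |u - v| ^ (2 * H)) / 2) →
        ∀ s t s' t' : ℝ, s < t → s' < t' → s ≠ s' →
          |t' - s'| ≤ min |t - s'| |s - s'| →
          |∫ ω, (B t ω - B s ω) * B10star B s' t' ω ∂μ| ≤
            C * (|t' - s'| ^ 3 / |t - s'| ^ (2 - 2 * H) +
              |t' - s'| ^ 3 / |s - s'| ^ (2 - 2 * H)) := by
  refine ⟨12, by norm_num, ?_⟩
  intro Ω _ μ _ B hcont hmeas hL2 _hmean hcov s t s' t' hst h' hss' hmin
  have hp0 : 0 < 2 * H := by linarith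
  have hp1 : 2 * H < 1 := by linarith
  have hL0 : 0 < t' - s' := by linarith
  have habsL : |t' - s'| = t' - s' := abs_of_pos hL0
  have hts' : t' - s' ≤ |t - s'| := by
    rw [← habsL]; exact le_trans hmin (min_le_left _ _)
  have hss : t' - s' ≤ |s - s'| := by
    rw [← habsL]; exact le_trans hmin (min_le_right _ _)
  have hts'0 : 0 < |t - s'| := lt_of_lt_of_le hL0 hts'
  have hss0 : 0 < |s - s'| := lt_of_lt_of_le hL0 hss
  have hBB : ∀ u v : ℝ, Integrable (fun ω => B u ω * B v ω) μ :=
    fun u v => L2mul (hL2 u) (hL2 v)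
  -- covariance of increments
  have hf : ∀ u : ℝ, (∫ ω, (B t ω - B s ω) * (B u ω - B s' ω) ∂μ) =
      (|s - u| ^ (2*H) - |t - u| ^ (2*H) + |t - s'| ^ (2*H) - |s - s'| ^ (2*H)) / 2 := by
    intro u
    have hexp : (fun ω => (B t ω - B s ω) * (B u ω - B s' ω)) =
        fun ω => (B t ω * B u ω - B t ω * B s' ω) - (B s ω * B u ω - B s ω * B s' ω) :=
      funext fun ω => by ring
    have h1 : Integrable (fun ω => B t ω * B u ω - B t ω * B s' ω) μ :=
      (hBB t u).sub (hBB t s')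
    have h2 : Integrable (fun ω => B s ω * B u ω - B s ω * B s' ω) μ :=
      (hBB s u).sub (hBB s s')
    rw [hexp, integral_sub h1 h2,
      integral_sub (hBB t u) (hBB t s'), integral_sub (hBB s u) (hBB s s'),
      hcov, hcov, hcov, hcov]
    ring
  set ν : Measure ℝ := volume.restrict (Set.Ioc s' t') with hν
  have hjoint : AEStronglyMeasurable (fun p : ℝ × Ω => B p.1 p.2) (ν.prod μ) :=
    joint_aesm μ ν B hcont hmeas
  have hXaesm : AEStronglyMeasurable (fun ω => B t ω - B s ω) μ :=
    (hmeas t).sub (hmeas s)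
  have hsndX : AEStronglyMeasurable (fun q : ℝ × Ω => B t q.2 - B s q.2) (ν.prod μ) :=
    hXaesm.comp_quasiMeasurePreserving MeasureTheory.Measure.quasiMeasurePreserving_snd
  have hsnds' : AEStronglyMeasurable (fun q : ℝ × Ω => B s' q.2) (ν.prod μ) :=
    (hmeas s').comp_quasiMeasurePreserving MeasureTheory.Measure.quasiMeasurePreserving_snd
  have hFm : AEStronglyMeasurable
      (fun q : ℝ × Ω => (B t q.2 - B s q.2) * (B q.1 q.2 - B s' q.2)) (ν.prod μ) :=
    hsndX.mul (hjoint.sub hsnds')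
  -- E[(B_u - B_s')^2]
  have hEY : ∀ u : ℝ, ∫ ω, (B u ω - B s' ω) ^ 2 ∂μ = |u - s'| ^ (2*H) := by
    intro u
    have hexp : (fun ω => (B u ω - B s' ω) ^ 2) =
        fun ω => (B u ω * B u ω - B u ω * B s' ω) - (B s' ω * B u ω - B s' ω * B s' ω) :=
      funext fun ω => by ring
    have h1 : Integrable (fun ω => B u ω * B u ω - B u ω * B s' ω) μ :=
      (hBB u u).sub (hBB u s')
    have h2 : Integrable (fun ω => B s' ω * B u ω - B s' ω * B s' ω) μ :=
      (hBB s' u).sub (hBB s' s')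
    rw [hexp, integral_sub h1 h2,
      integral_sub (hBB u u) (hBB u s'), integral_sub (hBB s' u) (hBB s' s'),
      hcov, hcov, hcov, hcov, abs_sub_comm s' u]
    simp only [sub_self, abs_zero, Real.zero_rpow (show (2*H) ≠ 0 by positivity)]
    ring
  have hXsq : Integrable (fun ω => (B t ω - B s ω) ^ 2) μ :=
    ((hL2 t).sub (hL2 s)).integrable_sq
  set K : ℝ := (∫ ω, (B t ω - B s ω) ^ 2 ∂μ + (t' - s') ^ (2*H)) / 2 with hK
  have hFint : Integrable
      (fun q : ℝ × Ω => (B t q.2 - B s q.2) * (B q.1 q.2 - B s' q.2)) (ν.prod μ) := by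
    rw [integrable_prod_iff hFm]
    constructor
    · exact Eventually.of_forall fun u =>
        L2mul ((hL2 t).sub (hL2 s)) ((hL2 u).sub (hL2 s'))
    · apply Integrable.mono' (g := fun _ => K) (integrable_const _)
        hFm.norm.integral_prod_right'
      rw [hν, ae_restrict_iff' measurableSet_Ioc]
      apply Eventually.of_forall
      intro u hu
      have hYsq : Integrable (fun ω => (B u ω - B s' ω) ^ 2) μ :=
        ((hL2 u).sub (hL2 s')).integrable_sq
      have step1 : ∫ ω, ‖(B t ω - B s ω) * (B u ω - B s' ω)‖ ∂μ ≤
          ∫ ω, ((B t ω - B s ω) ^ 2 + (B u ω - B s' ω) ^ 2) / 2 ∂μ := by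
        have hs2 : Integrable (fun ω => ((B t ω - B s ω) ^ 2 + (B u ω - B s' ω) ^ 2) / 2) μ :=
          (hXsq.add hYsq).div_const 2
        apply integral_mono_of_nonneg (Eventually.of_forall fun ω => norm_nonneg _) hs2
        apply Eventually.of_forall
        intro ω
        show ‖(B t ω - B s ω) * (B u ω - B s' ω)‖ ≤
          ((B t ω - B s ω) ^ 2 + (B u ω - B s' ω) ^ 2) / 2
        rw [Real.norm_eq_abs, abs_mul]
        nlinarith [sq_nonneg (|B t ω - B s ω| - |B u ω - B s' ω|),
          sq_abs (B t ω - B s ω), sq_abs (B u ω - B s' ω),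
          abs_nonneg (B t ω - B s ω), abs_nonneg (B u ω - B s' ω)]
      have step2 : ∫ ω, ((B t ω - B s ω) ^ 2 + (B u ω - B s' ω) ^ 2) / 2 ∂μ =
          (∫ ω, (B t ω - B s ω) ^ 2 ∂μ + |u - s'| ^ (2*H)) / 2 := by
        rw [MeasureTheory.integral_div, integral_add hXsq hYsq, hEY u]
      have step3 : |u - s'| ^ (2*H) ≤ (t' - s') ^ (2*H) := by
        rw [abs_of_nonneg (by linarith [hu.1.le] : (0:ℝ) ≤ u - s')]
        exact Real.rpow_le_rpow (by linarith [hu.1.le]) (by linarith [hu.2]) (by positivity)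
      rw [Real.norm_eq_abs, abs_of_nonneg (integral_nonneg fun ω => norm_nonneg _)]
      rw [step2] at step1
      rw [hK]
      linarith
  have hswap := MeasureTheory.integral_integral_swap
    (f := fun (u : ℝ) (ω : Ω) => (B t ω - B s ω) * (B u ω - B s' ω))
    (μ := ν) (ν := μ) hFint
  have hXint_inner : Integrable
      (fun ω => ∫ u, (B t ω - B s ω) * (B u ω - B s' ω) ∂ν) μ :=
    hFint.integral_prod_right
  have hXYt' : Integrable (fun ω => (B t ω - B s ω) * (B t' ω - B s' ω)) μ :=
    L2mul ((hL2 t).sub (hL2 s)) ((hL2 t').sub (hL2 s'))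
  -- pointwise decomposition
  have hpt : (fun ω => (B t ω - B s ω) * B10star B s' t' ω) =
      fun ω => (∫ u, (B t ω - B s ω) * (B u ω - B s' ω) ∂ν) -
        ((B t ω - B s ω) * (B t' ω - B s' ω)) * ((t' - s') / 2) := by
    funext ω
    unfold B10star
    rw [intervalIntegral.integral_of_le h'.le]
    have h2 := MeasureTheory.integral_const_mul (μ := ν) (B t ω - B s ω) (fun u => B u ω - B s' ω)
    rw [← hν, h2]
    ring
  have hswap' : (∫ u, (∫ ω, (B t ω - B s ω) * (B u ω - B s' ω) ∂μ) ∂ν) =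
      ∫ ω, (∫ u, (B t ω - B s ω) * (B u ω - B s' ω) ∂ν) ∂μ := hswap
  have hmulc : Integrable
      (fun ω => ((B t ω - B s ω) * (B t' ω - B s' ω)) * ((t' - s') / 2)) μ :=
    hXYt'.mul_const _
  rw [hpt, integral_sub hXint_inner hmulc, MeasureTheory.integral_mul_const, ← hswap']
  have hinner : (∫ u, (∫ ω, (B t ω - B s ω) * (B u ω - B s' ω) ∂μ) ∂ν) =
      ∫ u in s'..t',
        (|s - u| ^ (2*H) - |t - u| ^ (2*H) + |t - s'| ^ (2*H) - |s - s'| ^ (2*H)) / 2 := by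
    rw [intervalIntegral.integral_of_le h'.le]
    apply setIntegral_congr_fun measurableSet_Ioc
    intro u _
    exact hf u
  rw [hinner, hf t']
  have hdet := det_main (p := 2*H) hp0 hp1 h' hts' hss
  calc |(∫ u in s'..t',
        (|s - u| ^ (2*H) - |t - u| ^ (2*H) + |t - s'| ^ (2*H) - |s - s'| ^ (2*H)) / 2) -
        ((|s - t'| ^ (2*H) - |t - t'| ^ (2*H) + |t - s'| ^ (2*H) - |s - s'| ^ (2*H)) / 2) *
          ((t' - s') / 2)|
      = |(∫ u in s'..t',
        (|s - u| ^ (2*H) - |t - u| ^ (2*H) + |t - s'| ^ (2*H) - |s - s'| ^ (2*H)) / 2) -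
        (t' - s') / 2 * ((|s - t'| ^ (2*H) - |t - t'| ^ (2*H) + |t - s'| ^ (2*H) -
          |s - s'| ^ (2*H)) / 2)| := by congr 1; ring
    _ ≤ 12 * (t' - s') ^ 3 * (|t - s'| ^ (2*H - 2) + |s - s'| ^ (2*H - 2)) := hdet
    _ = 12 * (|t' - s'| ^ 3 / |t - s'| ^ (2 - 2 * H) +
        |t' - s'| ^ 3 / |s - s'| ^ (2 - 2 * H)) := by
      rw [habsL]
      rw [show (2*H - 2 : ℝ) = -(2 - 2*H) by ring]
      rw [Real.rpow_neg (abs_nonneg (t - s')), Real.rpow_neg (abs_nonneg (s - s'))]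
      field_simp
end
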